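/- arXiv:math/0607783 — 9 statements merged into one kernel-verified Lean document; each statement's English description precedes it below -/
import Mathlib

section
/- Let B be a compact Hausdorff space and H a separable complex Hilbert space. For each b ∈ B let D(b) be a self-adjoint (generally unbounded, densely defined) operator on H, and let R₊(b), R₋(b) be bounded operators on H satisfying: for all x ∈ H, R₊(b)x ∈ dom D(b) and D(b)(R₊(b)x) + i·(R₊(b)x) = x, and for all y ∈ dom D(b), R₊(b)(D(b)y + i·y) = y (i.e. R₊(b) = (D(b)+i)⁻¹), and similarly R₋(b) = (D(b)−i)⁻¹ with −i in place of i. Let Dom D denote the set of continuous functions f : B → H such that f(b) ∈ dom D(b) for all b and the map b ↦ D(b)f(b) is continuous. Then the following are equivalent: (1) for every b ∈ B the subspace {f(b) : f ∈ Dom D} of dom D(b) is a core for D(b), i.e. the closure of the graph of the restriction of D(b) to this subspace equals the graph of D(b); (2) for every x ∈ H the maps b ↦ R₊(b)x and b ↦ R₋(b)x are continuous. -/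
open scoped InnerProductSpace

/-- The "continuous domain" of a family of unbounded operators: continuous functions
`f : B → H` such that `f b ∈ dom (D b)` for all `b` and `b ↦ D b (f b)` is continuous. -/
def contDom {B H : Type*} [TopologicalSpace B] [NormedAddCommGroup H]
    [InnerProductSpace ℂ H] (D : B → (H →ₗ.[ℂ] H)) : Set (B → H) :=
  {f | Continuous f ∧ ∃ hf : ∀ b, f b ∈ (D b).domain,
    Continuous fun b => D b ⟨f b, hf b⟩}

/-- For a self-adjoint operator `T` and `c` purely imaginary of norm one,
`‖y‖ ≤ ‖T y + c • y‖` for `y` in the domain of `T`. -/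
lemma aux_norm_le {H : Type*} [NormedAddCommGroup H] [InnerProductSpace ℂ H] [CompleteSpace H]
    (T : H →ₗ.[ℂ] H) (h : IsSelfAdjoint T) (c : ℂ) (hc1 : ‖c‖ = 1) (hc2 : c.re = 0)
    (y : T.domain) : ‖(y : H)‖ ≤ ‖T y + c • (y : H)‖ := by
  have hd : Dense (T.domain : Set H) := h.dense_domain
  have hsym := LinearPMap.adjoint_isFormalAdjoint hd
  rw [LinearPMap.isSelfAdjoint_def] at h
  rw [h] at hsym
  have hreal : (⟪T y, (y : H)⟫_ℂ).im = 0 := by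
    have h1 : ⟪T y, (y : H)⟫_ℂ = ⟪(y : H), T y⟫_ℂ := hsym y y
    have h2 : ⟪(y : H), T y⟫_ℂ = starRingEnd ℂ ⟪T y, (y : H)⟫_ℂ := (inner_conj_symm _ _).symm
    simpa using by linarith [congrArg Complex.im (h1.trans h2),
      Complex.conj_im (⟪T y, (y : H)⟫_ℂ)]
  have hcross : Complex.re ⟪T y, c • (y : H)⟫_ℂ = 0 := by
    rw [inner_smul_right, Complex.mul_re, hc2]
    simp [hreal]
  have hsq : ‖T y + c • (y : H)‖ ^ 2 = ‖T y‖ ^ 2 + ‖(y : H)‖ ^ 2 := by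
    rw [@norm_add_sq ℂ, RCLike.re_to_complex, hcross, norm_smul, hc1]
    ring
  have h1 : ‖(y : H)‖ ^ 2 ≤ ‖T y + c • (y : H)‖ ^ 2 := by
    rw [hsq]; nlinarith [sq_nonneg ‖T y‖]
  nlinarith [norm_nonneg (T y + c • (y : H)), norm_nonneg (y : H)]

/-- If the evaluations of the continuous domain are a core of `D b` for every `b`,
then the resolvent family `R` is strongly continuous. -/
lemma aux_res_cont {H B : Type*} [NormedAddCommGroup H] [InnerProductSpace ℂ H]
    [TopologicalSpace B]
    (D : B → (H →ₗ.[ℂ] H)) (R : B → (H →L[ℂ] H)) (c : ℂ)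
    (hnorm : ∀ b (x : H), ‖R b x‖ ≤ ‖x‖)
    (hc : ‖c‖ = 1)
    (hR1 : ∀ b (x : H), ∃ hx : R b x ∈ (D b).domain, D b ⟨R b x, hx⟩ + c • R b x = x)
    (hR2 : ∀ b (y : (D b).domain), R b (D b y + c • (y : H)) = y)
    (hcore : ∀ b : B, closure {p : H × H | ∃ f ∈ contDom D, ∃ hfb : f b ∈ (D b).domain,
        p = (f b, D b ⟨f b, hfb⟩)}
      = {p : H × H | ∃ hp : p.1 ∈ (D b).domain, p.2 = D b ⟨p.1, hp⟩})
    (x : H) : Continuous fun b => R b x := by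
  rw [continuous_iff_continuousAt]
  intro b₀
  rw [ContinuousAt, Metric.tendsto_nhds]
  intro ε hε
  obtain ⟨hy, hyx⟩ := hR1 b₀ x
  have hmem : ((R b₀ x, D b₀ ⟨R b₀ x, hy⟩) : H × H) ∈ closure {p : H × H | ∃ f ∈ contDom D,
      ∃ hfb : f b₀ ∈ (D b₀).domain, p = (f b₀, D b₀ ⟨f b₀, hfb⟩)} := by
    rw [hcore b₀]; exact ⟨hy, rfl⟩
  rw [Metric.mem_closure_iff] at hmem
  obtain ⟨q, hq, hdq⟩ := hmem (ε/5) (by linarith)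
  obtain ⟨f, ⟨hfc, hfd, hDfc⟩, hfb, hq'⟩ := hq
  subst hq'
  rw [Prod.dist_eq, max_lt_iff] at hdq
  obtain ⟨hd1, hd2⟩ := hdq
  have hn1 : ‖R b₀ x - f b₀‖ < ε/5 := by rw [← dist_eq_norm]; exact hd1
  have hn2 : ‖D b₀ ⟨R b₀ x, hy⟩ - D b₀ ⟨f b₀, hfb⟩‖ < ε/5 := by
    rw [← dist_eq_norm]; exact hd2
  set g : B → H := fun b => D b ⟨f b, hfd b⟩ + c • f b with hg
  have hgc : Continuous g := hDfc.add (hfc.const_smul c)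
  have hRg : ∀ b, R b (g b) = f b := fun b => hR2 b ⟨f b, hfd b⟩
  have hxg : ‖x - g b₀‖ < 2 * (ε/5) := by
    have hx2 : x - g b₀ = (D b₀ ⟨R b₀ x, hy⟩ - D b₀ ⟨f b₀, hfb⟩) + c • (R b₀ x - f b₀) := by
      calc x - g b₀ = (D b₀ ⟨R b₀ x, hy⟩ + c • R b₀ x) - g b₀ := by rw [hyx]
        _ = (D b₀ ⟨R b₀ x, hy⟩ + c • R b₀ x) - (D b₀ ⟨f b₀, hfb⟩ + c • f b₀) := rfl
        _ = (D b₀ ⟨R b₀ x, hy⟩ - D b₀ ⟨f b₀, hfb⟩) + c • (R b₀ x - f b₀) := by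
            rw [smul_sub]; abel
    rw [hx2]
    calc ‖(D b₀ ⟨R b₀ x, hy⟩ - D b₀ ⟨f b₀, hfb⟩) + c • (R b₀ x - f b₀)‖
        ≤ ‖D b₀ ⟨R b₀ x, hy⟩ - D b₀ ⟨f b₀, hfb⟩‖ + ‖c • (R b₀ x - f b₀)‖ := norm_add_le _ _
      _ = ‖D b₀ ⟨R b₀ x, hy⟩ - D b₀ ⟨f b₀, hfb⟩‖ + ‖R b₀ x - f b₀‖ := by
          rw [norm_smul, hc, one_mul]
      _ < 2 * (ε/5) := by linarith
  have hev1 := Metric.tendsto_nhds.mp (hgc.tendsto b₀) (ε/5) (by linarith)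
  have hev2 := Metric.tendsto_nhds.mp (hfc.tendsto b₀) (ε/5) (by linarith)
  filter_upwards [hev1, hev2] with b h1 h2
  have hn3 : ‖g b₀ - g b‖ < ε/5 := by rw [← dist_eq_norm, dist_comm]; exact h1
  have hn4 : ‖f b - f b₀‖ < ε/5 := by rw [← dist_eq_norm]; exact h2
  have hn5 : ‖f b₀ - R b₀ x‖ < ε/5 := by rw [norm_sub_rev]; exact hn1
  have key : R b x - R b₀ x = R b (x - g b) + (f b - f b₀) + (f b₀ - R b₀ x) := by
    rw [map_sub, hRg]; abel
  have e0 : ‖x - g b‖ ≤ ‖x - g b₀‖ + ‖g b₀ - g b‖ := by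
    have h' : x - g b = (x - g b₀) + (g b₀ - g b) := by abel
    rw [h']; exact norm_add_le _ _
  have e1 : ‖R b (x - g b)‖ < 3 * (ε/5) := lt_of_le_of_lt (hnorm b _) (by linarith)
  rw [dist_eq_norm, key]
  have := norm_add₃_le (a := R b (x - g b)) (b := f b - f b₀) (c := f b₀ - R b₀ x)
  linarith

/-- If the resolvent family is strongly continuous, then the evaluations of the
continuous domain are a core of `D b` for every `b`. -/
lemma aux_core {H B : Type*} [NormedAddCommGroup H] [InnerProductSpace ℂ H]
    [TopologicalSpace B]
    (D : B → (H →ₗ.[ℂ] H)) (R : B → (H →L[ℂ] H)) (c : ℂ)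
    (hR1 : ∀ b (x : H), ∃ hx : R b x ∈ (D b).domain, D b ⟨R b x, hx⟩ + c • R b x = x)
    (hR2 : ∀ b (y : (D b).domain), R b (D b y + c • (y : H)) = y)
    (hres : ∀ x : H, Continuous fun b => R b x)
    (b : B) :
    closure {p : H × H | ∃ f ∈ contDom D, ∃ hfb : f b ∈ (D b).domain,
        p = (f b, D b ⟨f b, hfb⟩)}
      = {p : H × H | ∃ hp : p.1 ∈ (D b).domain, p.2 = D b ⟨p.1, hp⟩} := by
  have hgraph_eq : {p : H × H | ∃ hp : p.1 ∈ (D b).domain, p.2 = D b ⟨p.1, hp⟩}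
      = {p : H × H | R b (p.2 + c • p.1) = p.1} := by
    ext p
    constructor
    · rintro ⟨hp, hp2⟩
      have h := hR2 b ⟨p.1, hp⟩
      rw [Set.mem_setOf_eq, hp2]
      exact h
    · intro h
      obtain ⟨hx, hxe⟩ := hR1 b (p.2 + c • p.1)
      refine ⟨h ▸ hx, ?_⟩
      have hsub : (⟨p.1, h ▸ hx⟩ : (D b).domain) = ⟨R b (p.2 + c • p.1), hx⟩ :=
        Subtype.ext h.symm
      rw [hsub]
      have h2 : D b ⟨R b (p.2 + c • p.1), hx⟩
          = (p.2 + c • p.1) - c • R b (p.2 + c • p.1) := eq_sub_of_add_eq hxe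
      rw [h2, h]
      abel
  have hclosed : IsClosed {p : H × H | R b (p.2 + c • p.1) = p.1} :=
    isClosed_eq ((R b).continuous.comp (continuous_snd.add (continuous_fst.const_smul c)))
      continuous_fst
  apply subset_antisymm
  · rw [hgraph_eq]
    refine closure_minimal ?_ hclosed
    rintro p ⟨f, ⟨hfc, hfd, hDfc⟩, hfb, rfl⟩
    exact hR2 b ⟨f b, hfb⟩
  · rw [hgraph_eq]
    intro p hp
    apply subset_closure
    have h : R b (p.2 + c • p.1) = p.1 := hp
    obtain ⟨hx, hxe⟩ := hR1 b (p.2 + c • p.1)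
    set X : H := p.2 + c • p.1 with hX
    refine ⟨fun b' => R b' X, ⟨hres X, fun b' => (hR1 b' X).choose, ?_⟩,
      (hR1 b X).choose, ?_⟩
    · have heq : (fun b' => D b' ⟨R b' X, (hR1 b' X).choose⟩)
          = fun b' => X - c • R b' X := by
        funext b'
        exact eq_sub_of_add_eq (hR1 b' X).choose_spec
      rw [heq]
      exact continuous_const.sub ((hres X).const_smul c)
    · have h2 : D b ⟨R b X, (hR1 b X).choose⟩ = X - c • R b X :=
        eq_sub_of_add_eq (hR1 b X).choose_spec
      rw [Prod.ext_iff]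
      refine ⟨h.symm, ?_⟩
      rw [h2, h]
      simp [hX]
  
/-- Prop. 1.1 (equivalence (1) ⟺ (2)): for a family of self-adjoint operators `D b` with
resolvents `R₊ b = (D b + i)⁻¹` and `R₋ b = (D b - i)⁻¹`, the evaluations of the continuous
domain form a core of `D b` for every `b` if and only if the resolvents depend strongly
continuously on `b`. -/
theorem core_iff_strongly_continuous_resolvents
    {H : Type*} [NormedAddCommGroup H] [InnerProductSpace ℂ H] [CompleteSpace H]
    [TopologicalSpace.SeparableSpace H]
    {B : Type*} [TopologicalSpace B] [CompactSpace B] [T2Space B]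
    (D : B → (H →ₗ.[ℂ] H)) (hsa : ∀ b, IsSelfAdjoint (D b))
    (Rp Rm : B → (H →L[ℂ] H))
    (hRp1 : ∀ b (x : H), ∃ hx : Rp b x ∈ (D b).domain,
      D b ⟨Rp b x, hx⟩ + Complex.I • Rp b x = x)
    (hRp2 : ∀ b (y : (D b).domain), Rp b (D b y + Complex.I • (y : H)) = y)
    (hRm1 : ∀ b (x : H), ∃ hx : Rm b x ∈ (D b).domain,
      D b ⟨Rm b x, hx⟩ - Complex.I • Rm b x = x)
    (hRm2 : ∀ b (y : (D b).domain), Rm b (D b y - Complex.I • (y : H)) = y) :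
    (∀ b : B, closure {p : H × H | ∃ f ∈ contDom D, ∃ hfb : f b ∈ (D b).domain,
        p = (f b, D b ⟨f b, hfb⟩)}
      = {p : H × H | ∃ hp : p.1 ∈ (D b).domain, p.2 = D b ⟨p.1, hp⟩})
    ↔ (∀ x : H, Continuous (fun b => Rp b x) ∧ Continuous (fun b => Rm b x)) := by
  have hRm1' : ∀ b (x : H), ∃ hx : Rm b x ∈ (D b).domain,
      D b ⟨Rm b x, hx⟩ + (-Complex.I) • Rm b x = x := by
    intro b x
    obtain ⟨hx, he⟩ := hRm1 b x
    exact ⟨hx, by rw [neg_smul, ← sub_eq_add_neg]; exact he⟩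
  have hRm2' : ∀ b (y : (D b).domain), Rm b (D b y + (-Complex.I) • (y : H)) = y := by
    intro b y
    rw [neg_smul, ← sub_eq_add_neg]; exact hRm2 b y
  have hnp : ∀ b (x : H), ‖Rp b x‖ ≤ ‖x‖ := by
    intro b x
    obtain ⟨hx, he⟩ := hRp1 b x
    calc ‖Rp b x‖ ≤ ‖D b ⟨Rp b x, hx⟩ + Complex.I • Rp b x‖ :=
          aux_norm_le (D b) (hsa b) Complex.I (by simp) (by simp) ⟨Rp b x, hx⟩
      _ = ‖x‖ := by rw [he]
  have hnm : ∀ b (x : H), ‖Rm b x‖ ≤ ‖x‖ := by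
    intro b x
    obtain ⟨hx, he⟩ := hRm1' b x
    calc ‖Rm b x‖ ≤ ‖D b ⟨Rm b x, hx⟩ + (-Complex.I) • Rm b x‖ :=
          aux_norm_le (D b) (hsa b) (-Complex.I) (by simp) (by simp) ⟨Rm b x, hx⟩
      _ = ‖x‖ := by rw [he]
  constructor
  · intro hcore x
    exact ⟨aux_res_cont D Rp Complex.I hnp (by simp) hRp1 hRp2 hcore x,
      aux_res_cont D Rm (-Complex.I) hnm (by simp) hRm1' hRm2' hcore x⟩
  · intro hres b
    exact aux_core D Rp Complex.I hRp1 hRp2 (fun x => (hres x).1) b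
end

section
/- Let B be a compact Hausdorff space and H a complex Hilbert space. Let M be a linear subspace of C(B,H) that is stable under pointwise multiplication by continuous functions B → ℝ (i.e. if χ : B → ℝ is continuous and f ∈ M then the function b ↦ χ(b)f(b) lies in M). If for every b ∈ B the set {f(b) : f ∈ M} is dense in H, then M is dense in C(B,H) with respect to the supremum norm. -/
open Set

/-- If `M ⊆ C(B,H)` is a linear subspace, stable under pointwise multiplication by
continuous real-valued functions, such that at every point `b` the evaluations
`{f b | f ∈ M}` are dense in `H`, then `M` is dense in `C(B,H)` (sup norm). -/
theorem dense_of_pointwise_dense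
    {B : Type*} [TopologicalSpace B] [CompactSpace B] [T2Space B]
    {H : Type*} [NormedAddCommGroup H] [InnerProductSpace ℂ H]
    (M : Submodule ℂ C(B, H))
    (hstable : ∀ (χ : C(B, ℝ)), ∀ f ∈ M,
      ContinuousMap.mk (fun b => χ b • f b)
        ((map_continuous χ).smul (map_continuous f)) ∈ M)
    (hdense : ∀ b : B, Dense {x : H | ∃ f ∈ M, f b = x}) :
    Dense (M : Set C(B, H)) := by
  rw [Metric.dense_iff]
  intro g ε hε
  -- pick, for each point, an element of M close to g near that point
  have key : ∀ b : B, ∃ f ∈ M, ‖f b - g b‖ < ε / 2 := by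
    intro b
    obtain ⟨x, hx, f, hfM, hfb⟩ :=
      Metric.dense_iff.mp (hdense b) (g b) (ε / 2) (by positivity)
    exact ⟨f, hfM, by rw [hfb]; simpa [dist_eq_norm, norm_sub_rev] using hx⟩
  choose F hFM hFb using key
  set U : B → Set B := fun b => {x | ‖F b x - g x‖ < ε / 2} with hU
  have hUopen : ∀ b, IsOpen (U b) := by
    intro b
    have : Continuous fun x => ‖F b x - g x‖ := by fun_prop
    exact isOpen_lt this continuous_const
  have hUcover : (univ : Set B) ⊆ ⋃ b, U b := fun x _ =>
    mem_iUnion.2 ⟨x, hFb x⟩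
  obtain ⟨t, ht⟩ := isCompact_univ.elim_finite_subcover U hUopen hUcover
  -- index the finite cover by `Fin n`
  obtain ⟨n, e⟩ : ∃ n, Nonempty (Fin n ≃ t) := ⟨t.card, ⟨t.equivFin.symm⟩⟩
  obtain ⟨e⟩ := e
  have hcov : (univ : Set B) ⊆ ⋃ i : Fin n, U (e i) := by
    intro x hx
    obtain ⟨b, hbt, hbx⟩ := mem_iUnion₂.1 (ht hx)
    exact mem_iUnion.2 ⟨e.symm ⟨b, hbt⟩, by simpa using hbx⟩
  obtain ⟨χ, hχsupp, hχsum, hχ01, -⟩ :=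
    exists_continuous_sum_one_of_isOpen_isCompact
      (s := fun i : Fin n => U (e i)) (fun i => hUopen _) isCompact_univ hcov
  -- the candidate approximation
  set h : C(B, H) := ∑ i : Fin n,
    ContinuousMap.mk (fun b => χ i b • F (e i) b)
      ((map_continuous (χ i)).smul (map_continuous (F (e i)))) with hh
  have hhM : h ∈ M := Submodule.sum_mem M fun i _ => hstable (χ i) _ (hFM _)
  refine ⟨h, Metric.mem_ball'.2 ?_, hhM⟩
  rw [ContinuousMap.dist_lt_iff hε]
  intro x
  have hsum1 : ∑ i : Fin n, χ i x = 1 := by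
    have := hχsum (mem_univ x)
    simpa using this
  have hx : g x - h x = ∑ i : Fin n, χ i x • (g x - F (e i) x) := by
    simp only [hh, ContinuousMap.coe_sum, Finset.sum_apply, ContinuousMap.coe_mk,
      smul_sub]
    rw [Finset.sum_sub_distrib, ← Finset.sum_smul, hsum1, one_smul]
  rw [dist_eq_norm, hx]
  calc ‖∑ i : Fin n, χ i x • (g x - F (e i) x)‖
      ≤ ∑ i : Fin n, ‖χ i x • (g x - F (e i) x)‖ := norm_sum_le _ _
    _ ≤ ∑ i : Fin n, χ i x * (ε / 2) := by
        refine Finset.sum_le_sum fun i _ => ?_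
        rw [norm_smul, Real.norm_eq_abs, abs_of_nonneg (hχ01 i x).1]
        by_cases h0 : χ i x = 0
        · simp [h0]
        · have hxU : x ∈ U (e i) :=
            hχsupp i (subset_tsupport _ h0)
          have : ‖g x - F (e i) x‖ < ε / 2 := by
            rw [norm_sub_rev]; exact hxU
          exact mul_le_mul_of_nonneg_left this.le (hχ01 i x).1
    _ = ε / 2 := by rw [← Finset.sum_mul, hsum1, one_mul]
    _ < ε := by linarith
end

section
/- Let φ : ℝ → ℝ be a smooth, compactly supported, even function whose support equals [−1,1] and with φ′(x) > 0 for all x ∈ (−1,0). For an integer n ≥ 1 define φₙ(x) = φ(nx). Then for every even continuous function ψ : ℝ → ℝ with compact support contained in the open interval (−1/n, 1/n) there exists a continuous compactly supported function g : ℝ → ℝ with g(0) = 0 such that ψ = g ∘ φₙ. -/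
set_option maxHeartbeats 800000

open Set

/-- A continuous function injective on a compact set has a continuous inverse on the image. -/
lemma invFunOn_continuousOn_aux {f : ℝ → ℝ} {K : Set ℝ} (hK : IsCompact K)
    (hf : ContinuousOn f K) (hinj : Set.InjOn f K) :
    ContinuousOn (Function.invFunOn f K) (f '' K) := by
  rcases K.eq_empty_or_nonempty with rfl | hne
  · simp
  haveI : CompactSpace ↥K := isCompact_iff_compactSpace.mp hK
  set e : ↥K ≃ ↥(f '' K) := Equiv.Set.imageOfInjOn f K hinj with he
  have hecont : Continuous e := by
    apply Continuous.subtype_mk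
    exact hf.restrict
  let H := hecont.homeoOfEquivCompactToT2
  have hHsymm : ∀ y : ↥(f '' K), (H.symm y : ℝ) ∈ K ∧ f (H.symm y : ℝ) = (y : ℝ) := by
    intro y
    refine ⟨(H.symm y).2, ?_⟩
    have : e (H.symm y) = y := by
      have : H (H.symm y) = y := H.apply_symm_apply y
      exact this
    have := congrArg Subtype.val this
    simpa [he, Equiv.Set.imageOfInjOn] using this
  have key : ∀ y : ↥(f '' K), Function.invFunOn f K (y : ℝ) = (H.symm y : ℝ) := by
    intro y
    have hex : ∃ a ∈ K, f a = (y : ℝ) := ⟨_, (hHsymm y).1, (hHsymm y).2⟩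
    apply hinj (Function.invFunOn_mem hex) (hHsymm y).1
    rw [Function.invFunOn_eq hex, (hHsymm y).2]
  rw [continuousOn_iff_continuous_restrict]
  have : Set.restrict (f '' K) (Function.invFunOn f K) = fun y => (H.symm y : ℝ) := by
    funext y; exact key y
  change Continuous (Set.restrict (f '' K) (Function.invFunOn f K)); rw [this]
  exact continuous_subtype_val.comp H.symm.continuous

/-- For the bump function `φ` (smooth, even, support `[-1,1]`, increasing on `(-1,0)`)
and `φₙ(x) = φ(n x)`, every even continuous `ψ` with support contained in `(-1/n, 1/n)`
factors as `ψ = g ∘ φₙ` for some continuous compactly supported `g` with `g 0 = 0`. -/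
theorem even_factors_through_bump
    (φ : ℝ → ℝ) (hφsmooth : ContDiff ℝ (⊤ : ℕ∞) φ) (hφeven : ∀ x, φ (-x) = φ x)
    (hφsupp : tsupport φ = Set.Icc (-1 : ℝ) 1)
    (hφ' : ∀ x ∈ Set.Ioo (-1 : ℝ) 0, 0 < deriv φ x)
    (n : ℕ) (hn : 1 ≤ n)
    (ψ : ℝ → ℝ) (hψcont : Continuous ψ) (hψeven : ∀ x, ψ (-x) = ψ x)
    (hψsupp : tsupport ψ ⊆ Set.Ioo (-(1 / (n : ℝ))) (1 / (n : ℝ))) :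
    ∃ g : ℝ → ℝ, Continuous g ∧ HasCompactSupport g ∧ g 0 = 0 ∧
      ∀ x, ψ x = g (φ ((n : ℝ) * x)) := by
  have hnR : (0 : ℝ) < n := by exact_mod_cast hn
  have hφcont : Continuous φ := hφsmooth.continuous
  -- ψ vanishes outside (-1/n, 1/n)
  have hψ0 : ∀ x, x ∉ Set.Ioo (-(1 / (n : ℝ))) (1 / (n : ℝ)) → ψ x = 0 := fun x hx =>
    image_eq_zero_of_notMem_tsupport (fun h => hx (hψsupp h))
  -- φ vanishes on (-∞, -1]
  have hleft : ∀ t : ℝ, t ≤ -1 → φ t = 0 := by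
    have heq : Set.EqOn φ (fun _ => (0 : ℝ)) (Set.Iio (-1 : ℝ)) := by
      intro x hx
      apply image_eq_zero_of_notMem_tsupport
      rw [hφsupp]
      intro h
      exact absurd h.1 (not_le.mpr hx)
    have := heq.closure hφcont continuous_const
    rw [closure_Iio] at this
    exact fun t ht => this ht
  -- φ vanishes for t ≥ 1
  have hright : ∀ t : ℝ, 1 ≤ t → φ t = 0 := fun t ht => by
    rw [← hφeven t]; exact hleft (-t) (by linarith)
  -- strict monotone on [-1, 0]
  have hmono : StrictMonoOn φ (Set.Icc (-1 : ℝ) 0) := by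
    apply strictMonoOn_of_deriv_pos (convex_Icc _ _) hφcont.continuousOn
    rw [interior_Icc]; exact hφ'
  set M := φ 0 with hMdef
  have hφm1 : φ (-1) = 0 := hleft _ le_rfl
  have hM : 0 < M := by
    have := hmono (Set.mem_Icc.mpr ⟨le_rfl, by norm_num⟩)
      (Set.mem_Icc.mpr ⟨by norm_num, le_rfl⟩) (by norm_num)
    rwa [hφm1] at this
  -- φ maps into [0, M]
  have hrangeK : ∀ t ∈ Set.Icc (-1 : ℝ) 0, φ t ∈ Set.Icc 0 M := by
    intro t ht
    constructor
    · have := hmono.monotoneOn (Set.mem_Icc.mpr ⟨le_rfl, by norm_num⟩) ht ht.1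
      rwa [hφm1] at this
    · exact hmono.monotoneOn ht (Set.mem_Icc.mpr ⟨by norm_num, le_rfl⟩) ht.2
  have hrange : ∀ t : ℝ, φ t ∈ Set.Icc 0 M := by
    intro t
    rcases le_or_gt t (-1) with h | h
    · rw [hleft t h]; exact ⟨le_rfl, hM.le⟩
    rcases le_or_gt 1 t with h' | h'
    · rw [hright t h']; exact ⟨le_rfl, hM.le⟩
    rcases le_or_gt t 0 with h'' | h''
    · exact hrangeK t ⟨h.le, h''⟩
    · rw [← hφeven t]; exact hrangeK (-t) ⟨by linarith, by linarith⟩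
  -- image of [-1,0] is exactly [0,M]
  have himage : φ '' Set.Icc (-1 : ℝ) 0 = Set.Icc 0 M := by
    apply Set.Subset.antisymm
    · rintro y ⟨t, ht, rfl⟩; exact hrangeK t ht
    · have := intermediate_value_Icc (by norm_num : (-1 : ℝ) ≤ 0)
        (hφcont.continuousOn (s := Set.Icc (-1 : ℝ) 0))
      rwa [hφm1] at this
  have hinj : Set.InjOn φ (Set.Icc (-1 : ℝ) 0) := hmono.injOn
  set invφ := Function.invFunOn φ (Set.Icc (-1 : ℝ) 0) with hinvdef
  have hinvcont : ContinuousOn invφ (Set.Icc 0 M) := by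
    rw [← himage]
    exact invFunOn_continuousOn_aux isCompact_Icc hφcont.continuousOn hinj
  -- clamp
  set clamp : ℝ → ℝ := fun y => max 0 (min y M) with hclampdef
  have hclampcont : Continuous clamp :=
    continuous_const.max (continuous_id.min continuous_const)
  have hclampmem : ∀ y, clamp y ∈ Set.Icc 0 M := by
    intro y
    constructor
    · exact le_max_left _ _
    · exact max_le hM.le (min_le_right _ _)
  have hclampid : ∀ y ∈ Set.Icc 0 M, clamp y = y := by
    intro y hy
    simp only [hclampdef]
    rw [min_eq_left hy.2, max_eq_right hy.1]
  -- the function g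
  set g : ℝ → ℝ := fun y => ψ (invφ (clamp y) / n) * max 0 (min 1 (M + 1 - y)) with hgdef
  have hgcont : Continuous g := by
    apply Continuous.mul
    · have h1 : Continuous fun y => invφ (clamp y) :=
        hinvcont.comp_continuous hclampcont hclampmem
      exact hψcont.comp (h1.div_const _)
    · exact continuous_const.max (continuous_const.min (continuous_const.sub continuous_id))
  -- invφ 0 = -1
  have hinv0 : invφ 0 = -1 := by
    have hex : ∃ a ∈ Set.Icc (-1 : ℝ) 0, φ a = 0 :=
      ⟨-1, Set.mem_Icc.mpr ⟨le_rfl, by norm_num⟩, hφm1⟩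
    apply hinj (Function.invFunOn_mem hex) (Set.mem_Icc.mpr ⟨le_rfl, by norm_num⟩)
    rw [Function.invFunOn_eq hex, hφm1]
  have hψm1n : ψ (-1 / (n : ℝ)) = 0 := by
    apply hψ0
    intro h
    have := h.1
    rw [neg_div] at this
    linarith
  -- g vanishes for y ≤ 0
  have hgneg : ∀ y ≤ (0 : ℝ), g y = 0 := by
    intro y hy
    have : clamp y = 0 := by
      simp only [hclampdef]
      rw [max_eq_left]
      exact le_trans (min_le_left _ _) hy
    simp only [hgdef, this, hinv0, hψm1n, zero_mul]
  have hg0 : g 0 = 0 := hgneg 0 le_rfl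
  -- g has compact support
  have hgsupp : HasCompactSupport g := by
    apply HasCompactSupport.intro (isCompact_Icc (a := (0 : ℝ)) (b := M + 1))
    intro y hy
    rcases not_and_or.mp (Set.mem_Icc.not.mp hy) with h | h
    · exact hgneg y (le_of_not_ge h)
    · have : min 1 (M + 1 - y) ≤ 0 := le_trans (min_le_right _ _) (by push_neg at h; linarith)
      simp only [hgdef, max_eq_left this, mul_zero]
  -- key computation on [-1, 0]
  have hkey : ∀ t ∈ Set.Icc (-1 : ℝ) 0, g (φ t) = ψ (t / n) := by
    intro t ht
    have h1 : clamp (φ t) = φ t := hclampid _ (hrangeK t ht)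
    have h2 : invφ (φ t) = t := hinj.leftInvOn_invFunOn ht
    have h3 : max 0 (min 1 (M + 1 - φ t)) = 1 := by
      rw [min_eq_left (by linarith [(hrangeK t ht).2]), max_eq_right (by norm_num : (0:ℝ) ≤ 1)]
    simp only [hgdef, h1, h2, h3, mul_one]
  -- main identity for x ≤ 0
  have hmain : ∀ x : ℝ, x ≤ 0 → ψ x = g (φ ((n : ℝ) * x)) := by
    intro x hx
    rcases le_or_gt ((n : ℝ) * x) (-1) with h | h
    · rw [hleft _ h, hg0]
      apply hψ0
      intro hmem
      have h1 : -(1 / (n : ℝ)) < x := hmem.1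
      have h2 : (n : ℝ) * (-(1 / (n : ℝ))) < (n : ℝ) * x :=
        mul_lt_mul_of_pos_left h1 hnR
      rw [mul_neg, mul_one_div, div_self (ne_of_gt hnR)] at h2
      linarith
    · have ht : (n : ℝ) * x ∈ Set.Icc (-1 : ℝ) 0 :=
        ⟨h.le, mul_nonpos_of_nonneg_of_nonpos hnR.le hx⟩
      rw [hkey _ ht, mul_comm, mul_div_assoc, div_self (ne_of_gt hnR), mul_one]
  refine ⟨g, hgcont, hgsupp, hg0, fun x => ?_⟩
  rcases le_or_gt x 0 with hx | hx
  · exact hmain x hx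
  · have h1 : ψ x = ψ (-x) := (hψeven x).symm
    have h2 : φ ((n : ℝ) * x) = φ ((n : ℝ) * (-x)) := by
      rw [mul_neg, hφeven]
    rw [h1, h2]
    exact hmain (-x) (by linarith)
end

section
/- Let B be a compact Hausdorff space and H a separable complex Hilbert space. For each b ∈ B let D(b) be a self-adjoint operator on H with resolvents R₊(b) = (D(b)+i)⁻¹ and R₋(b) = (D(b)−i)⁻¹ (characterized by: R₊(b)x ∈ dom D(b) and D(b)(R₊(b)x) + i·(R₊(b)x) = x for all x ∈ H, and R₊(b)(D(b)y + i·y) = y for all y ∈ dom D(b); similarly for R₋ with −i), and assume that for every x ∈ H the maps b ↦ R₊(b)x and b ↦ R₋(b)x are continuous. For each b let K(b) be a symmetric operator with dom D(b) ⊆ dom K(b) such that the operator D(b)+K(b), with domain dom D(b), is self-adjoint with resolvents R′₊(b) = (D(b)+K(b)+i)⁻¹ and R′₋(b) = (D(b)+K(b)−i)⁻¹ (characterized analogously). Assume that for each b the bounded operator x ↦ K(b)(R₊(b)x) is compact, and that the map b ↦ K(b)R₊(b) is continuous in operator norm. Then for each b the operators R′₊(b) − R₊(b) and R′₋(b) −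 R₋(b) are compact, and the maps b ↦ R′₊(b) − R₊(b) and b ↦ R′₋(b) − R₋(b) are continuous in operator norm. -/
/-!
Write `T = K R₊`. Since `(D + K + i) R₊ x = x + T x`, the resolvents satisfy
`R'₊ (1 + T) = R₊`; the operator `1 + T` is injective because `R₊` is, and surjective because
`x = (D + i) R'₊ y` solves `x + T x = y`, so it is invertible and `R'₊ - R₊ = -R₊ (1 + T)⁻¹ T`,
which is compact.
The family `(1 + T)⁻¹ T` is norm-continuous and compact, while `R₊` is strongly continuous with
`‖R₊‖ ≤ 1`; a bounded strongly convergent family converges uniformly on compact sets, so the product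
is norm-continuous. Finally symmetry gives `R₋ = R₊*` and `R'₋ = R'₊*`, and the adjoint of a compact
operator `f` is compact because `‖f* y‖² ≤ ‖y‖ ‖f f* y‖`.
-/

open Filter Topology Metric Complex ContinuousLinearMap
open scoped InnerProduct

theorem IsSelfAdjoint.isFormalAdjoint_self {H : Type*} [NormedAddCommGroup H]
    [InnerProductSpace ℂ H] [CompleteSpace H] {A : H →ₗ.[ℂ] H} (hA : IsSelfAdjoint A) :
    A.IsFormalAdjoint A := by
  simpa only [LinearPMap.isSelfAdjoint_def.mp hA] using
    LinearPMap.adjoint_isFormalAdjoint hA.dense_domain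

namespace LinearPMap.IsFormalAdjoint

variable {H : Type*} [NormedAddCommGroup H] [InnerProductSpace ℂ H] {A : H →ₗ.[ℂ] H}

theorem im_inner_map_self (hA : A.IsFormalAdjoint A) (u : A.domain) :
    (inner ℂ (A u) (u : H)).im = 0 :=
  conj_eq_iff_im.mp <| by rw [inner_conj_symm]; exact (hA u u).symm

theorem norm_le_norm_map_add_I_smul (hA : A.IsFormalAdjoint A) (u : A.domain) :
    ‖(u : H)‖ ≤ ‖A u + I • (u : H)‖ := by
  have hpyth : ‖A u + I • (u : H)‖ ^ 2 = ‖A u‖ ^ 2 + ‖(u : H)‖ ^ 2 := by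
    rw [@norm_add_sq ℂ, inner_smul_right, norm_smul, norm_I, one_mul]
    simp [hA.im_inner_map_self u]
  exact (pow_le_pow_iff_left₀ (norm_nonneg _) (norm_nonneg _) two_ne_zero).mp
    (hpyth ▸ le_add_of_nonneg_left (sq_nonneg _))

theorem opNorm_le_one {R : H →L[ℂ] H} (hA : A.IsFormalAdjoint A)
    (hR : ∀ x, ∃ hx : R x ∈ A.domain, A ⟨R x, hx⟩ + I • R x = x) : ‖R‖ ≤ 1 :=
  R.opNorm_le_bound zero_le_one fun x => by
    obtain ⟨hx, hAx⟩ := hR x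
    simpa [hAx] using hA.norm_le_norm_map_add_I_smul ⟨R x, hx⟩

theorem adjoint_eq [CompleteSpace H] {Rp Rm : H →L[ℂ] H} (hA : A.IsFormalAdjoint A)
    (hRp : ∀ x, ∃ hx : Rp x ∈ A.domain, A ⟨Rp x, hx⟩ + I • Rp x = x)
    (hRm : ∀ x, ∃ hx : Rm x ∈ A.domain, A ⟨Rm x, hx⟩ - I • Rm x = x) :
    ContinuousLinearMap.adjoint Rp = Rm := by
  refine ((eq_adjoint_iff Rm Rp).mpr fun x y => ?_).symm
  obtain ⟨hu, hx⟩ := hRm x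
  obtain ⟨hv, hy⟩ := hRp y
  have hsymm := hA ⟨Rm x, hu⟩ ⟨Rp y, hv⟩
  conv_lhs => rw [← hy]
  conv_rhs => rw [← hx]
  simp only [inner_add_right, inner_smul_right, inner_sub_left, inner_smul_left, conj_I]
    at hsymm ⊢
  linear_combination -hsymm

end LinearPMap.IsFormalAdjoint

namespace LinearPMap

variable {H : Type*} [NormedAddCommGroup H] [InnerProductSpace ℂ H]
  {A K : H →ₗ.[ℂ] H} {R R' T : H →L[ℂ] H}

theorem exists_add_apply_add_I_smul_eq
    (hR : ∀ x, ∃ hx : R x ∈ A.domain, A ⟨R x, hx⟩ + I • R x = x)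
    (hT : ∀ x, ∃ hx : R x ∈ K.domain, T x = K ⟨R x, hx⟩) (x : H) :
    ∃ hx : R x ∈ (A + K).domain, (A + K) ⟨R x, hx⟩ + I • R x = x + T x := by
  obtain ⟨hxA, hAx⟩ := hR x
  obtain ⟨hxK, hKx⟩ := hT x
  refine ⟨Submodule.mem_inf.mpr ⟨hxA, hxK⟩, ?_⟩
  rw [add_apply A K, hKx, add_right_comm]
  exact congrArg (· + K ⟨R x, hxK⟩) hAx

theorem resolvent_mul_one_add_eq
    (hR : ∀ x, ∃ hx : R x ∈ A.domain, A ⟨R x, hx⟩ + I • R x = x)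
    (hR' : ∀ y : (A + K).domain, R' ((A + K) y + I • (y : H)) = y)
    (hT : ∀ x, ∃ hx : R x ∈ K.domain, T x = K ⟨R x, hx⟩) :
    R' * (1 + T) = R := by
  ext x
  obtain ⟨hx, hAKx⟩ := exists_add_apply_add_I_smul_eq hR hT x
  simpa [hAKx] using hR' ⟨R x, hx⟩

theorem injective_of_forall_apply_add_I_smul_eq
    (hR : ∀ x, ∃ hx : R x ∈ A.domain, A ⟨R x, hx⟩ + I • R x = x) :
    Function.Injective R := by
  intro x y hxy
  obtain ⟨hx, hAx⟩ := hR x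
  obtain ⟨hy, hAy⟩ := hR y
  have hxy' : (⟨R x, hx⟩ : A.domain) = ⟨R y, hy⟩ := Subtype.ext hxy
  rw [← hAx, ← hAy, hxy', hxy]

theorem surjective_one_add
    (hR : ∀ y : A.domain, R (A y + I • (y : H)) = y)
    (hR' : ∀ x, ∃ hx : R' x ∈ (A + K).domain, (A + K) ⟨R' x, hx⟩ + I • R' x = x)
    (hT : ∀ x, ∃ hx : R x ∈ K.domain, T x = K ⟨R x, hx⟩) :
    Function.Surjective ⇑(1 + T : H →L[ℂ] H) := by
  intro y
  obtain ⟨hy, hAKy⟩ := hR' y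
  obtain ⟨hyA, hyK⟩ := Submodule.mem_inf.mp hy
  set x := A ⟨R' y, hyA⟩ + I • R' y
  have hRx : R x = R' y := hR ⟨R' y, hyA⟩
  obtain ⟨hxK, hTx⟩ := hT x
  have hKx : K ⟨R x, hxK⟩ = K ⟨R' y, hyK⟩ := congrArg K (Subtype.ext hRx)
  refine ⟨x, ?_⟩
  calc (1 + T) x = A ⟨R' y, hyA⟩ + K ⟨R' y, hyK⟩ + I • R' y := by
        rw [_root_.add_apply, one_apply_eq_self, hTx, hKx, add_right_comm]
    _ = y := by rwa [add_apply] at hAKy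

theorem isUnit_one_add [CompleteSpace H]
    (hR : ∀ x, ∃ hx : R x ∈ A.domain, A ⟨R x, hx⟩ + I • R x = x)
    (hR₂ : ∀ y : A.domain, R (A y + I • (y : H)) = y)
    (hR' : ∀ x, ∃ hx : R' x ∈ (A + K).domain, (A + K) ⟨R' x, hx⟩ + I • R' x = x)
    (hR'₂ : ∀ y : (A + K).domain, R' ((A + K) y + I • (y : H)) = y)
    (hT : ∀ x, ∃ hx : R x ∈ K.domain, T x = K ⟨R x, hx⟩) :
    IsUnit (1 + T) := by
  refine isUnit_iff_bijective.mpr ⟨?_, surjective_one_add hR₂ hR' hT⟩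
  have hinj : Function.Injective ⇑(R' * (1 + T)) := by
    rw [resolvent_mul_one_add_eq hR hR'₂ hT]
    exact injective_of_forall_apply_add_I_smul_eq hR
  exact hinj.of_comp (f := ⇑R')

end LinearPMap

theorem Ring.sub_eq_neg_mul_inverse_mul {R : Type*} [Ring R] {r r' t : R} (ht : IsUnit (1 + t))
    (h : r' * (1 + t) = r) : r' - r = -(r * (Ring.inverse (1 + t) * t)) := by
  have hr' : r' = r * Ring.inverse (1 + t) := by
    rw [← h, mul_assoc, Ring.mul_inverse_cancel _ ht, mul_one]
  calc r' - r = r * (Ring.inverse (1 + t) - Ring.inverse (1 + t) * (1 + t)) := by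
        rw [Ring.inverse_mul_cancel _ ht, mul_sub, mul_one, hr']
    _ = -(r * (Ring.inverse (1 + t) * t)) := by noncomm_ring

theorem Continuous.ring_inverse {X R : Type*} [TopologicalSpace X] [NormedRing R]
    [HasSummableGeomSeries R] {f : X → R} (hf : Continuous f) (hunit : ∀ x, IsUnit (f x)) :
    Continuous fun x => Ring.inverse (f x) :=
  continuous_iff_continuousAt.mpr fun x => by
    obtain ⟨u, hu⟩ := hunit x
    exact (NormedRing.inverse_continuousAt u).comp_of_eq hf.continuousAt hu.symm

theorem TotallyBounded.image_of_dist_lt {α β γ : Type*} [PseudoMetricSpace β]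
    [PseudoMetricSpace γ] {s : Set α} {f : α → β} {g : α → γ} (hg : TotallyBounded (g '' s))
    (hfg : ∀ ε > 0, ∃ δ > 0, ∀ x ∈ s, ∀ y ∈ s, dist (g x) (g y) < δ → dist (f x) (f y) < ε) :
    TotallyBounded (f '' s) := by
  refine Metric.totallyBounded_iff.mpr fun ε hε => ?_
  obtain ⟨δ, hδ, hδε⟩ := hfg ε hε
  obtain ⟨t, hts, htfin, hcover⟩ := Set.exists_subset_image_finite_and.mp
    (Metric.finite_approx_of_totallyBounded hg δ hδ)
  refine ⟨f '' t, htfin.image f, ?_⟩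
  rintro - ⟨x, hx, rfl⟩
  obtain ⟨-, ⟨y, hy, rfl⟩, hxy⟩ := Set.mem_iUnion₂.mp (hcover ⟨x, hx, rfl⟩)
  exact Set.mem_biUnion ⟨y, hy, rfl⟩ (hδε x hx y (hts hy) hxy)

section Adjoint

variable {𝕜 E F : Type*} [RCLike 𝕜] [NormedAddCommGroup E] [InnerProductSpace 𝕜 E]
  [CompleteSpace E] [NormedAddCommGroup F] [InnerProductSpace 𝕜 F] [CompleteSpace F]

theorem ContinuousLinearMap.norm_adjoint_apply_sq_le (f : E →L[𝕜] F) (y : F) :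
    ‖(f†) y‖ ^ 2 ≤ ‖y‖ * ‖f ((f†) y)‖ := by
  rw [apply_norm_sq_eq_inner_adjoint_right, adjoint_adjoint]
  exact (RCLike.re_le_norm _).trans (norm_inner_le_norm _ _)

theorem IsCompactOperator.adjoint {f : E →L[𝕜] F} (hf : IsCompactOperator f) :
    IsCompactOperator (f†) := by
  have hff : TotallyBounded ((f ∘L f†) '' closedBall 0 1) :=
    ((hf.comp_clm (f†)).isCompact_closure_image_closedBall 1).totallyBounded.subset
      subset_closure
  refine (isCompactOperator_iff_isCompact_closure_image_closedBall (f† : F →ₗ[𝕜] E) one_pos).mpr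
    ((hff.image_of_dist_lt fun ε hε => ⟨ε ^ 2 / 2, by positivity, ?_⟩).closure.isCompact_of_isClosed
      isClosed_closure)
  intro x hx y hy hxy
  change dist ((f†) x) ((f†) y) < ε
  have hxy2 : ‖x - y‖ ≤ 2 := by
    rw [mem_closedBall_zero_iff] at hx hy
    linarith [norm_sub_le x y]
  rw [dist_eq_norm, ← map_sub] at hxy ⊢
  rw [comp_apply] at hxy
  nlinarith [f.norm_adjoint_apply_sq_le (x - y), norm_nonneg (f ((f†) (x - y))),
    norm_nonneg ((f†) (x - y))]

end Adjoint

section StrongConvergence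

variable {𝕜 E F G : Type*} [DenselyNormedField 𝕜] [NormedAddCommGroup E] [NormedSpace 𝕜 E]
  [NormedAddCommGroup F] [NormedSpace 𝕜 F] [NormedAddCommGroup G] [NormedSpace 𝕜 G]

theorem ContinuousLinearMap.tendstoUniformlyOn_of_tendsto_apply {ι : Type*} {l : Filter ι}
    {A : ι → F →L[𝕜] G} {f : F → G} (hbdd : ∃ M, ∀ i, ‖A i‖ ≤ M)
    (hlim : ∀ y, Tendsto (fun i => A i y) l (𝓝 (f y))) {K : Set F} (hK : IsCompact K) :
    TendstoUniformlyOn (fun i => ⇑(A i)) f l K := by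
  have heq : Equicontinuous (DFunLike.coe ∘ A) :=
    ((NormedSpace.equicontinuous_TFAE A).out 5 1).mp hbdd
  have h := (EquicontinuousOn.tendsto_uniformOnFun_iff_pi' (F := DFunLike.coe ∘ A) (𝔖 := {K})
    (by simpa using hK) (by simpa using heq.equicontinuousOn K) l f).mpr
    (tendsto_pi_nhds.mpr fun y => hlim y)
  exact UniformOnFun.tendsto_iff_tendstoUniformlyOn.mp h K rfl

theorem ContinuousLinearMap.opNorm_le_of_forall_mem_closedBall {g : E →L[𝕜] F} {ε : ℝ}
    (h : ∀ x ∈ closedBall (0 : E) 1, ‖g x‖ ≤ ε) : ‖g‖ ≤ ε := by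
  rw [← g.sSup_unitClosedBall_eq_norm]
  exact csSup_le ((nonempty_closedBall.mpr zero_le_one).image _) (Set.forall_mem_image.mpr h)

theorem Continuous.clm_comp_of_isCompactOperator {X : Type*} [TopologicalSpace X]
    {A : X → F →L[𝕜] G} {C : X → E →L[𝕜] F} (hbdd : ∃ M, ∀ b, ‖A b‖ ≤ M)
    (hA : ∀ y, Continuous fun b => A b y) (hCc : ∀ b, IsCompactOperator (C b))
    (hC : Continuous C) : Continuous fun b => A b ∘L C b := by
  obtain ⟨M, hM⟩ := hbdd
  refine continuous_iff_continuousAt.mpr fun b₀ => tendsto_sub_nhds_zero_iff.mp ?_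
  have hsplit : ∀ b, A b ∘L C b - A b₀ ∘L C b₀ = A b ∘L (C b - C b₀) + (A b - A b₀) ∘L C b₀ :=
    fun b => by rw [comp_sub, sub_comp]; abel
  simp_rw [hsplit]
  rw [← add_zero 0]
  refine Tendsto.add ?_ ?_
  · refine squeeze_zero_norm (fun b => (opNorm_comp_le _ _).trans
      (mul_le_mul_of_nonneg_right (hM b) (norm_nonneg _))) ?_
    simpa using (((hC.tendsto b₀).sub_const (C b₀)).norm.const_mul M)
  · have hunif := tendstoUniformlyOn_of_tendsto_apply ⟨M, hM⟩ (fun y => (hA y).tendsto b₀)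
      ((hCc b₀).isCompact_closure_image_closedBall 1)
    refine Metric.tendsto_nhds.mpr fun ε hε => ?_
    filter_upwards [Metric.tendstoUniformlyOn_iff.mp hunif (ε / 2) (half_pos hε)] with b hb
    rw [dist_zero_right]
    refine lt_of_le_of_lt (opNorm_le_of_forall_mem_closedBall fun x hx => ?_) (half_lt_self hε)
    rw [comp_apply, sub_apply, ← dist_eq_norm']
    exact (hb _ (subset_closure ⟨x, hx, rfl⟩)).le

end StrongConvergence

theorem resolvent_difference_compact_continuous_general
    {H : Type*} [NormedAddCommGroup H] [InnerProductSpace ℂ H] [CompleteSpace H]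
    {B : Type*} [TopologicalSpace B]
    -- the self-adjoint family `D` with strongly continuous resolvents `R₊, R₋`
    (D : B → (H →ₗ.[ℂ] H)) (hsa : ∀ b, IsSelfAdjoint (D b))
    (Rp Rm : B → (H →L[ℂ] H))
    (hRp1 : ∀ b (x : H), ∃ hx : Rp b x ∈ (D b).domain,
      D b ⟨Rp b x, hx⟩ + Complex.I • Rp b x = x)
    (hRp2 : ∀ b (y : (D b).domain), Rp b (D b y + Complex.I • (y : H)) = y)
    (hRm1 : ∀ b (x : H), ∃ hx : Rm b x ∈ (D b).domain,
      D b ⟨Rm b x, hx⟩ - Complex.I • Rm b x = x)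
    (hRpcont : ∀ x : H, Continuous fun b => Rp b x)
    -- the symmetric perturbations `K b` with `dom (D b) ⊆ dom (K b)`
    (K : B → (H →ₗ.[ℂ] H))
    -- `D b + K b` (whose domain is `dom (D b) ⊓ dom (K b) = dom (D b)`) is self-adjoint,
    -- with resolvents `R'₊, R'₋`
    (hsa' : ∀ b, IsSelfAdjoint (D b + K b))
    (Rp' Rm' : B → (H →L[ℂ] H))
    (hRp'1 : ∀ b (x : H), ∃ hx : Rp' b x ∈ (D b + K b).domain,
      (D b + K b) ⟨Rp' b x, hx⟩ + Complex.I • Rp' b x = x)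
    (hRp'2 : ∀ b (y : (D b + K b).domain),
      Rp' b ((D b + K b) y + Complex.I • (y : H)) = y)
    (hRm'1 : ∀ b (x : H), ∃ hx : Rm' b x ∈ (D b + K b).domain,
      (D b + K b) ⟨Rm' b x, hx⟩ - Complex.I • Rm' b x = x)
    -- `T b = K b ∘ R₊ b` is a compact operator depending norm-continuously on `b`
    (T : B → (H →L[ℂ] H))
    (hT : ∀ b (x : H), ∃ hx : Rp b x ∈ (K b).domain, T b x = K b ⟨Rp b x, hx⟩)
    (hTcompact : ∀ b, IsCompactOperator (T b))
    (hTcont : Continuous T) :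
    (∀ b, IsCompactOperator (Rp' b - Rp b) ∧ IsCompactOperator (Rm' b - Rm b)) ∧
      Continuous (fun b => Rp' b - Rp b) ∧ Continuous (fun b => Rm' b - Rm b) := by
  have hsymm : ∀ b, (D b).IsFormalAdjoint (D b) := fun b => (hsa b).isFormalAdjoint_self
  have hunit : ∀ b, IsUnit (1 + T b) := fun b =>
    LinearPMap.isUnit_one_add (hRp1 b) (hRp2 b) (hRp'1 b) (hRp'2 b) (hT b)
  set S : B → H →L[ℂ] H := fun b => Ring.inverse (1 + T b) * T b
  have hdiff : ∀ b, Rp' b - Rp b = -(Rp b * S b) := fun b =>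
    Ring.sub_eq_neg_mul_inverse_mul (hunit b)
      (LinearPMap.resolvent_mul_one_add_eq (hRp1 b) (hRp'2 b) (hT b))
  have hScompact : ∀ b, IsCompactOperator (S b) := fun b => (hTcompact b).clm_comp _
  have hScont : Continuous S := ((continuous_const.add hTcont).ring_inverse hunit).mul hTcont
  have hpcompact : ∀ b, IsCompactOperator (Rp' b - Rp b) := fun b => by
    rw [hdiff b]
    exact ((hScompact b).clm_comp (Rp b)).neg
  have hpcont : Continuous fun b => Rp' b - Rp b := by
    simp_rw [hdiff]
    exact (Continuous.clm_comp_of_isCompactOperator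
      ⟨1, fun b => (hsymm b).opNorm_le_one (hRp1 b)⟩ hRpcont hScompact hScont).neg
  have hadj : ∀ b, Rm' b - Rm b = (Rp' b - Rp b)† := fun b => by
    rw [map_sub, (hsymm b).adjoint_eq (hRp1 b) (hRm1 b),
      (hsa' b).isFormalAdjoint_self.adjoint_eq (hRp'1 b) (hRm'1 b)]
  simp_rw [hadj]
  exact ⟨fun b => ⟨hpcompact b, (hpcompact b).adjoint⟩, hpcont,
    (adjoint : (H →L[ℂ] H) ≃ₗᵢ⋆[ℂ] (H →L[ℂ] H)).continuous.comp hpcont⟩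

/-- Lemma 1.2: if the resolvents of the self-adjoint family `D b` are strongly continuous,
`K b` is symmetric with `dom (D b) ⊆ dom (K b)`, `D b + K b` (with domain `dom (D b)`) is
self-adjoint, and `K b (D b + i)⁻¹` is compact and norm-continuous in `b`, then the
differences of the resolvents of `D b + K b` and of `D b` are compact and norm-continuous. -/
theorem resolvent_difference_compact_continuous
    {H : Type*} [NormedAddCommGroup H] [InnerProductSpace ℂ H] [CompleteSpace H]
    [TopologicalSpace.SeparableSpace H]
    {B : Type*} [TopologicalSpace B] [CompactSpace B] [T2Space B]
    -- the self-adjoint family `D` with strongly continuous resolvents `R₊, R₋`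
    (D : B → (H →ₗ.[ℂ] H)) (hsa : ∀ b, IsSelfAdjoint (D b))
    (Rp Rm : B → (H →L[ℂ] H))
    (hRp1 : ∀ b (x : H), ∃ hx : Rp b x ∈ (D b).domain,
      D b ⟨Rp b x, hx⟩ + Complex.I • Rp b x = x)
    (hRp2 : ∀ b (y : (D b).domain), Rp b (D b y + Complex.I • (y : H)) = y)
    (hRm1 : ∀ b (x : H), ∃ hx : Rm b x ∈ (D b).domain,
      D b ⟨Rm b x, hx⟩ - Complex.I • Rm b x = x)
    (hRm2 : ∀ b (y : (D b).domain), Rm b (D b y - Complex.I • (y : H)) = y)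
    (hRpcont : ∀ x : H, Continuous fun b => Rp b x)
    (hRmcont : ∀ x : H, Continuous fun b => Rm b x)
    -- the symmetric perturbations `K b` with `dom (D b) ⊆ dom (K b)`
    (K : B → (H →ₗ.[ℂ] H))
    (hKsymm : ∀ b (u v : (K b).domain),
      (inner ℂ (K b u) (v : H) : ℂ) = inner ℂ (u : H) (K b v))
    (hdom : ∀ b, (D b).domain ≤ (K b).domain)
    -- `D b + K b` (whose domain is `dom (D b) ⊓ dom (K b) = dom (D b)`) is self-adjoint,
    -- with resolvents `R'₊, R'₋`
    (hsa' : ∀ b, IsSelfAdjoint (D b + K b))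
    (Rp' Rm' : B → (H →L[ℂ] H))
    (hRp'1 : ∀ b (x : H), ∃ hx : Rp' b x ∈ (D b + K b).domain,
      (D b + K b) ⟨Rp' b x, hx⟩ + Complex.I • Rp' b x = x)
    (hRp'2 : ∀ b (y : (D b + K b).domain),
      Rp' b ((D b + K b) y + Complex.I • (y : H)) = y)
    (hRm'1 : ∀ b (x : H), ∃ hx : Rm' b x ∈ (D b + K b).domain,
      (D b + K b) ⟨Rm' b x, hx⟩ - Complex.I • Rm' b x = x)
    (hRm'2 : ∀ b (y : (D b + K b).domain),
      Rm' b ((D b + K b) y - Complex.I • (y : H)) = y)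
    -- `T b = K b ∘ R₊ b` is a compact operator depending norm-continuously on `b`
    (T : B → (H →L[ℂ] H))
    (hT : ∀ b (x : H), ∃ hx : Rp b x ∈ (K b).domain, T b x = K b ⟨Rp b x, hx⟩)
    (hTcompact : ∀ b, IsCompactOperator (T b))
    (hTcont : Continuous T) :
    (∀ b, IsCompactOperator (Rp' b - Rp b) ∧ IsCompactOperator (Rm' b - Rm b)) ∧
      Continuous (fun b => Rp' b - Rp b) ∧ Continuous (fun b => Rm' b - Rm b) :=
  resolvent_difference_compact_continuous_general D hsa Rp Rm hRp1 hRp2 hRm1 hRpcont K hsa' Rp' Rm'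
    hRp'1 hRp'2 hRm'1 T hT hTcompact hTcont
end

section
/- Let B be a compact topological space and H a complex Hilbert space. Let F : B → B(H) be a strongly continuous map (for every x ∈ H the map b ↦ F(b)x is continuous) such that each F(b) is self-adjoint, each operator F(b)² − 1 is compact, and the map b ↦ F(b)² − 1 is continuous in the operator norm. Let φ : ℝ → ℝ be a continuous function with φ(1) = φ(−1) = 1. Then for each b the operator φ(F(b)) − 1 is compact, and the map b ↦ φ(F(b)) − 1 is continuous in the operator norm, where φ(F(b)) denotes the continuous functional calculus. -/
/-!
Since `φ - 1` vanishes at `±1`, Weierstrass approximation on `[-M, M]`, where `M` bounds all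
`‖F b‖` (Banach–Steinhaus), gives polynomials `q` with `φ x - 1 ≈ q x * (x ^ 2 - 1)`, hence
`φ(F b) - 1 ≈ q(F b) (F b ^ 2 - 1)` in norm, uniformly in `b`. Each approximant is compact, and it
is norm-continuous in `b`: `q(F b)` is bounded and strongly continuous, and such a family converges
uniformly on the relatively compact image of the unit ball under a compact operator. Compactness
and continuity pass to uniform limits.
-/

open Polynomial Filter Topology Metric Set

section StrongContinuity

variable {ι B 𝕜 E F G : Type*} [TopologicalSpace B] [NontriviallyNormedField 𝕜]
  [NormedAddCommGroup E] [NormedSpace 𝕜 E] [NormedAddCommGroup F] [NormedSpace 𝕜 F]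
  [NormedAddCommGroup G] [NormedSpace 𝕜 G]

theorem exists_norm_le_of_continuous_apply [CompactSpace B] [CompleteSpace E]
    {T : B → E →L[𝕜] F} (hT : ∀ x, Continuous fun b => T b x) : ∃ C, ∀ b, ‖T b‖ ≤ C :=
  banach_steinhaus fun x => (isCompact_range (hT x)).isBounded.exists_norm_le.imp
    fun _ hC b => hC _ ⟨b, rfl⟩

theorem continuous_clm_apply_of_norm_le {T : B → E →L[𝕜] F} {C : ℝ}
    (hT : ∀ x, Continuous fun b => T b x) (hC : ∀ b, ‖T b‖ ≤ C)
    {g : B → E} (hg : Continuous g) : Continuous fun b => T b (g b) := by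
  refine continuous_iff_continuousAt.2 fun b₀ => ?_
  have hsplit : ∀ b, T b (g b) = T b (g b - g b₀) + T b (g b₀) := fun b => by
    rw [map_sub, sub_add_cancel]
  have hsmall : Tendsto (fun b => T b (g b - g b₀)) (𝓝 b₀) (𝓝 0) := by
    refine squeeze_zero_norm (fun b => (T b).le_of_opNorm_le (hC b) _) ?_
    simpa using ((hg.tendsto b₀).sub_const (g b₀)).norm.const_mul C
  have hlim := hsmall.add ((hT (g b₀)).tendsto b₀)
  rw [zero_add] at hlim
  exact hlim.congr fun b => (hsplit b).symm

theorem continuous_pow_apply_of_norm_le {T : B → E →L[𝕜] E} {C : ℝ}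
    (hT : ∀ x, Continuous fun b => T b x) (hC : ∀ b, ‖T b‖ ≤ C) (n : ℕ) (x : E) :
    Continuous fun b => (T b ^ n) x := by
  induction n with
  | zero => exact continuous_const
  | succ n ih =>
    simp only [pow_succ']
    exact continuous_clm_apply_of_norm_le hT hC ih

theorem continuous_aeval_apply_of_norm_le {R : Type*} [CommSemiring R]
    [Algebra R (E →L[𝕜] E)] {T : B → E →L[𝕜] E} {C : ℝ}
    (hT : ∀ x, Continuous fun b => T b x) (hC : ∀ b, ‖T b‖ ≤ C) (p : R[X]) (x : E) :
    Continuous fun b => aeval (T b) p x := by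
  induction p using Polynomial.induction_on' with
  | add p q hp hq =>
    simp only [map_add, add_apply]
    exact hp.add hq
  | monomial n a =>
    simp only [aeval_monomial]
    exact (algebraMap R (E →L[𝕜] E) a).continuous.comp
      (continuous_pow_apply_of_norm_le hT hC n x)

theorem tendstoUniformlyOn_of_tendsto_apply_of_norm_le {l : Filter ι} {T : ι → E →L[𝕜] F}
    {C : ℝ} (hC : ∀ i, ‖T i‖ ≤ C) (hT : ∀ x, Tendsto (fun i => T i x) l (𝓝 0))
    {S : Set E} (hS : TotallyBounded S) : TendstoUniformlyOn (fun i => ⇑(T i)) 0 l S := by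
  obtain ⟨C, hC0, hC⟩ : ∃ C, 0 < C ∧ ∀ i, ‖T i‖ ≤ C :=
    ⟨max C 1, by positivity, fun i => (hC i).trans (le_max_left _ _)⟩
  rw [Metric.tendstoUniformlyOn_iff]
  intro ε hε
  obtain ⟨t, ht, hSt⟩ := Metric.totallyBounded_iff.1 hS (ε / (2 * C)) (by positivity)
  have hnet : ∀ᶠ i in l, ∀ y ∈ t, ‖T i y‖ < ε / 2 :=
    ht.eventually_all.2 fun y _ => by
      simpa using (hT y).norm.eventually (gt_mem_nhds (by simpa using half_pos hε))
  filter_upwards [hnet] with i hi x hx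
  obtain ⟨y, hy, hxy⟩ := mem_iUnion₂.1 (hSt hx)
  rw [mem_ball, dist_eq_norm] at hxy
  rw [Pi.zero_apply, dist_zero_left]
  calc ‖T i x‖ = ‖T i (x - y) + T i y‖ := by rw [map_sub, sub_add_cancel]
    _ ≤ C * ‖x - y‖ + ‖T i y‖ := norm_add_le_of_le ((T i).le_of_opNorm_le (hC i) _) le_rfl
    _ < C * (ε / (2 * C)) + ε / 2 := by gcongr; exact hi y hy
    _ = ε := by field_simp; ring

theorem tendsto_comp_of_isCompactOperator [NormedAlgebra ℝ 𝕜] {l : Filter ι}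
    {T : ι → F →L[𝕜] G} {C : ℝ} (hC : ∀ i, ‖T i‖ ≤ C)
    (hT : ∀ x, Tendsto (fun i => T i x) l (𝓝 0)) {K : E →L[𝕜] F} (hK : IsCompactOperator K) :
    Tendsto (fun i => (T i).comp K) l (𝓝 0) := by
  have hKball : TotallyBounded (K '' closedBall 0 1) :=
    (hK.isCompact_closure_image_closedBall 1).totallyBounded.subset subset_closure
  have hunif := Metric.tendstoUniformlyOn_iff.1
    (tendstoUniformlyOn_of_tendsto_apply_of_norm_le hC hT hKball)
  refine Metric.tendsto_nhds.2 fun ε hε => ?_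
  filter_upwards [hunif (ε / 2) (half_pos hε)] with i hi
  rw [dist_zero_right]
  refine lt_of_le_of_lt (ContinuousLinearMap.opNorm_le_of_unit_norm (half_pos hε).le
    fun x hx => ?_) (half_lt_self hε)
  simpa using (hi (K x) ⟨x, by simp [hx], rfl⟩).le

theorem continuous_comp_of_isCompactOperator [NormedAlgebra ℝ 𝕜] {Q : B → F →L[𝕜] G}
    {K : B → E →L[𝕜] F} {C : ℝ} (hQ : ∀ x, Continuous fun b => Q b x) (hC : ∀ b, ‖Q b‖ ≤ C)
    (hKcont : Continuous K) (hK : ∀ b, IsCompactOperator (K b)) :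
    Continuous fun b => (Q b).comp (K b) := by
  refine continuous_iff_continuousAt.2 fun b₀ => ?_
  rw [ContinuousAt, ← tendsto_sub_nhds_zero_iff]
  have hsplit : ∀ b, (Q b).comp (K b) - (Q b₀).comp (K b₀)
      = (Q b).comp (K b - K b₀) + (Q b - Q b₀).comp (K b₀) := fun b => by
    simp only [ContinuousLinearMap.comp_sub, ContinuousLinearMap.sub_comp]
    abel
  have hK₀ : Tendsto (fun b => (Q b).comp (K b - K b₀)) (𝓝 b₀) (𝓝 0) := by
    refine squeeze_zero_norm (fun b => ((Q b).opNorm_comp_le _).trans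
      (mul_le_mul_of_nonneg_right (hC b) (norm_nonneg _))) ?_
    simpa using ((hKcont.tendsto b₀).sub_const (K b₀)).norm.const_mul C
  have hQ₀ : Tendsto (fun b => (Q b - Q b₀).comp (K b₀)) (𝓝 b₀) (𝓝 0) :=
    tendsto_comp_of_isCompactOperator (C := C + C)
      (fun b => (norm_sub_le _ _).trans (add_le_add (hC b) (hC b₀)))
      (fun x => by simpa using ((hQ x).tendsto b₀).sub_const (Q b₀ x)) (hK b₀)
  simpa only [hsplit, add_zero] using hK₀.add hQ₀

end StrongContinuity

theorem exists_eq_mul_sq_sub_one {p : ℝ[X]} (h1 : p.eval 1 = 0) (hm1 : p.eval (-1) = 0) :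
    ∃ q : ℝ[X], p = q * (X ^ 2 - 1) := by
  obtain ⟨r, rfl⟩ := dvd_iff_isRoot.2 h1
  have hr : r.IsRoot (-1) := by
    simpa [show (-1 - 1 : ℝ) ≠ 0 by norm_num] using hm1
  obtain ⟨q, rfl⟩ := dvd_iff_isRoot.2 hr
  exact ⟨q, by simp only [map_one, map_neg]; ring⟩

theorem exists_polynomial_near_mul_sq_sub_one {f : ℝ → ℝ} {M : ℝ} (hM : 1 ≤ M)
    (hf : ContinuousOn f (Icc (-M) M)) (hf1 : f 1 = 0) (hfm1 : f (-1) = 0) {ε : ℝ}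
    (hε : 0 < ε) : ∃ q : ℝ[X], ∀ x ∈ Icc (-M) M, |f x - q.eval x * (x ^ 2 - 1)| < ε := by
  set δ := ε / (M + 2)
  obtain ⟨p, hp⟩ := exists_polynomial_near_of_continuousOn (-M) M f hf δ (by positivity)
  have hp1 : |p.eval 1| < δ := by simpa [hf1] using hp 1 ⟨by linarith, hM⟩
  have hpm1 : |p.eval (-1)| < δ := by simpa [hfm1] using hp (-1) ⟨by linarith, by linarith⟩
  -- `ℓ` interpolates `p` linearly at `±1`, so `p - ℓ` vanishes there
  set ℓ : ℝ[X] := C (p.eval 1 / 2) * (X + 1) - C (p.eval (-1) / 2) * (X - 1)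
  obtain ⟨q, hq⟩ := exists_eq_mul_sq_sub_one (p := p - ℓ) (by simp [ℓ]; ring) (by simp [ℓ]; ring)
  refine ⟨q, fun x hx => ?_⟩
  have hx1 : |x + 1| ≤ M + 1 := abs_le.2 ⟨by linarith [hx.1], by linarith [hx.2]⟩
  have hxm1 : |x - 1| ≤ M + 1 := abs_le.2 ⟨by linarith [hx.1], by linarith [hx.2]⟩
  have hqx : q.eval x * (x ^ 2 - 1)
      = p.eval x - (p.eval 1 / 2 * (x + 1) - p.eval (-1) / 2 * (x - 1)) := by
    simpa [ℓ] using (congrArg (eval x) hq).symm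
  calc |f x - q.eval x * (x ^ 2 - 1)|
      = |(f x - p.eval x) + p.eval 1 / 2 * (x + 1) - p.eval (-1) / 2 * (x - 1)| := by
        rw [hqx]; ring_nf
    _ ≤ |p.eval x - f x| + |p.eval 1| / 2 * |x + 1| + |p.eval (-1)| / 2 * |x - 1| := by
        refine (abs_sub _ _).trans (add_le_add ((abs_add_le _ _).trans ?_) ?_) <;>
          simp [abs_mul, abs_div, abs_sub_comm]
    _ < δ + δ / 2 * (M + 1) + δ / 2 * (M + 1) := by
        refine add_lt_add_of_lt_of_le (add_lt_add_of_lt_of_le (hp x hx) ?_) ?_ <;> gcongr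
    _ = δ * (M + 2) := by ring
    _ = ε := div_mul_cancel₀ _ (by positivity)

theorem spectrum_subset_Icc_of_norm_le {A : Type*} [NormedRing A] [NormedAlgebra ℝ A]
    [CompleteSpace A] [NormOneClass A] {a : A} {M : ℝ} (haM : ‖a‖ ≤ M) :
    spectrum ℝ a ⊆ Icc (-M) M :=
  fun _ hx => abs_le.1 ((spectrum.norm_le_norm_of_mem hx).trans haM)

theorem cfc_sub_one_sub_aeval_mul_sq_sub_one {A : Type*} [Ring A] [StarRing A]
    [TopologicalSpace A] [Algebra ℝ A] [ContinuousFunctionalCalculus ℝ A IsSelfAdjoint] {a : A}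
    (ha : IsSelfAdjoint a) {φ : ℝ → ℝ} (hφ : ContinuousOn φ (spectrum ℝ a)) (q : ℝ[X]) :
    cfc (fun x => φ x - 1 - q.eval x * (x ^ 2 - 1)) a
      = cfc φ a - 1 - aeval a q * (a ^ 2 - 1) := by
  rw [cfc_sub _ _ a, cfc_sub _ _ a, cfc_mul _ _ a, cfc_sub _ _ a, cfc_pow_id a 2,
    cfc_const_one ℝ a, cfc_polynomial q a]

theorem norm_cfc_sub_one_sub_aeval_mul_sq_sub_one_lt {A : Type*} [CStarAlgebra A] {a : A}
    (ha : IsSelfAdjoint a) {M : ℝ} (haM : ‖a‖ ≤ M) {φ : ℝ → ℝ} (hφ : ContinuousOn φ (Icc (-M) M))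
    {q : ℝ[X]} {ε : ℝ} (hε : 0 < ε)
    (hq : ∀ x ∈ Icc (-M) M, |φ x - 1 - q.eval x * (x ^ 2 - 1)| < ε) :
    ‖cfc φ a - 1 - aeval a q * (a ^ 2 - 1)‖ < ε := by
  obtain _ | _ := subsingleton_or_nontrivial A
  · simpa [Subsingleton.elim _ (0 : A)] using hε
  have hσ := spectrum_subset_Icc_of_norm_le haM
  rw [← cfc_sub_one_sub_aeval_mul_sq_sub_one ha (hφ.mono hσ)]
  exact norm_cfc_lt hε fun x hx => hq x (hσ hx)

/-- Lemma 1.5: if `F b` is a strongly continuous family of bounded self-adjoint operators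
with `F b ^ 2 - 1` compact and norm-continuous in `b` (with `B` compact), then for every
continuous `φ : ℝ → ℝ` with `φ 1 = φ (-1) = 1`, the family `φ(F b) - 1` is compact and
norm-continuous in `b`. -/
theorem cfc_sub_one_compact_continuous
    {B : Type*} [TopologicalSpace B] [CompactSpace B]
    {H : Type*} [NormedAddCommGroup H] [InnerProductSpace ℂ H] [CompleteSpace H]
    (F : B → (H →L[ℂ] H)) (hsa : ∀ b, IsSelfAdjoint (F b))
    (hstrong : ∀ x : H, Continuous fun b => F b x)
    (hcompact : ∀ b, IsCompactOperator ((F b ^ 2 - 1 : H →L[ℂ] H)))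
    (hcont : Continuous fun b => (F b ^ 2 - 1 : H →L[ℂ] H))
    (φ : ℝ → ℝ) (hφ : Continuous φ) (hφ1 : φ 1 = 1) (hφm1 : φ (-1) = 1) :
    (∀ b, IsCompactOperator ((cfc φ (F b) - 1 : H →L[ℂ] H))) ∧
      Continuous fun b => (cfc φ (F b) - 1 : H →L[ℂ] H) := by
  obtain ⟨M, hM⟩ := exists_norm_le_of_continuous_apply hstrong
  have hFM : ∀ b, ‖F b‖ ≤ max M 1 := fun b => (hM b).trans (le_max_left _ _)
  set g : ℝ[X] → B → H →L[ℂ] H := fun q b => aeval (F b) q * (F b ^ 2 - 1)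
  have hg_approx : ∀ ε > 0, ∃ q, ∀ b, dist (cfc φ (F b) - 1) (g q b) < ε := fun ε hε => by
    obtain ⟨q, hq⟩ := exists_polynomial_near_mul_sq_sub_one (f := fun x => φ x - 1)
      (le_max_right M 1) (hφ.sub continuous_const).continuousOn (by simp [hφ1]) (by simp [hφm1]) hε
    exact ⟨q, fun b => (dist_eq_norm _ _).trans_lt
      (norm_cfc_sub_one_sub_aeval_mul_sq_sub_one_lt (hsa b) (hFM b) hφ.continuousOn hε hq)⟩
  have hg_cont : ∀ q, Continuous (g q) := fun q => by
    have hQ := continuous_aeval_apply_of_norm_le hstrong hFM q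
    obtain ⟨C, hC⟩ := exists_norm_le_of_continuous_apply hQ
    exact continuous_comp_of_isCompactOperator hQ hC hcont hcompact
  refine ⟨fun b => isClosed_setOfPred_isCompactOperator.closure_subset
    (Metric.mem_closure_iff.2 fun ε hε => ?_),
    continuous_of_uniform_approx_of_continuous fun u hu => ?_⟩
  · obtain ⟨q, hq⟩ := hg_approx ε hε
    exact ⟨g q b, (hcompact b).clm_comp _, hq b⟩
  · obtain ⟨ε, hε, hεu⟩ := Metric.mem_uniformity_dist.1 hu
    obtain ⟨q, hq⟩ := hg_approx ε hε
    exact ⟨g q, hg_cont q, fun b => hεu (hq b)⟩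
end

section
/- Let B be a compact topological space and H a complex Hilbert space. Let T : B → B(H) be a strongly continuous map (for every x ∈ H the map b ↦ T(b)x is continuous) and let K : B → B(H) be a map, continuous in the operator norm, such that each K(b) is compact. Then each operator T(b)∘K(b) is compact and the map b ↦ T(b)∘K(b) is continuous in the operator norm. -/
/-- The composition of a strongly continuous family of bounded operators with a
norm-continuous family of compact operators (over a compact parameter space) is a
norm-continuous family of compact operators. -/
theorem strongly_continuous_comp_compact
    {B : Type*} [TopologicalSpace B] [CompactSpace B]
    {H : Type*} [NormedAddCommGroup H] [InnerProductSpace ℂ H] [CompleteSpace H]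
    (T : B → (H →L[ℂ] H)) (hT : ∀ x : H, Continuous fun b => T b x)
    (K : B → (H →L[ℂ] H)) (hKcompact : ∀ b, IsCompactOperator (K b))
    (hKcont : Continuous K) :
    (∀ b, IsCompactOperator ((T b).comp (K b))) ∧
      Continuous fun b => (T b).comp (K b) := by
  constructor
  · intro b
    have := (hKcompact b).clm_comp (T b)
    simpa [ContinuousLinearMap.coe_comp'] using this
  -- uniform bound on ‖T b‖ via Banach–Steinhaus
  obtain ⟨M, hM⟩ : ∃ C, ∀ b, ‖T b‖ ≤ C := by
    apply banach_steinhaus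
    intro x
    have hco : IsCompact (Set.range fun b => ‖T b x‖) :=
      isCompact_range ((hT x).norm)
    obtain ⟨C, hC⟩ := hco.bddAbove
    exact ⟨C, fun b => hC ⟨b, rfl⟩⟩
  set M' : ℝ := max M 0 with hM'def
  have hM'nonneg : 0 ≤ M' := le_max_right _ _
  have hM' : ∀ b, ‖T b‖ ≤ M' := fun b => le_trans (hM b) (le_max_left _ _)
  rw [continuous_iff_continuousAt]
  intro b₀
  rw [ContinuousAt, Metric.tendsto_nhds]
  intro ε hε
  have hM1 : (0:ℝ) < M' + 1 := by linarith
  set δ : ℝ := ε / (8 * (M' + 1)) with hδdef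
  have hδpos : 0 < δ := by positivity
  -- the compact set
  have hS : IsCompact (closure ((K b₀) '' Metric.closedBall 0 1)) :=
    (hKcompact b₀).isCompact_closure_image_closedBall (𝕜₁ := ℂ) 1
  set S := closure ((K b₀) '' Metric.closedBall 0 1) with hSdef
  -- finite δ-net of S
  obtain ⟨t, htfin, htcov⟩ := Metric.totallyBounded_iff.1 hS.totallyBounded δ hδpos
  -- eventually, T b is close to T b₀ on all points of the net
  have h1 : ∀ᶠ b in nhds b₀, ∀ y ∈ t, ‖T b y - T b₀ y‖ < ε / 8 := by
    rw [Filter.eventually_all_finite htfin]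
    intro y _
    have hcont : Continuous fun b => ‖T b y - T b₀ y‖ :=
      ((hT y).sub continuous_const).norm
    have h0 : ‖T b₀ y - T b₀ y‖ < ε / 8 := by simp; positivity
    exact (hcont.tendsto b₀).eventually_lt_const h0 |>.mono fun b hb => hb
  -- eventually, K b is δ-close to K b₀
  have h2 : ∀ᶠ b in nhds b₀, ‖K b - K b₀‖ < δ := by
    have : Continuous fun b => ‖K b - K b₀‖ :=
      (hKcont.sub continuous_const).norm
    have h0 : ‖K b₀ - K b₀‖ < δ := by simp [hδpos]
    exact (this.tendsto b₀).eventually_lt_const h0 |>.mono fun b hb => hb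
  filter_upwards [h1, h2] with b hb1 hb2
  rw [dist_eq_norm]
  have key : ‖(T b).comp (K b) - (T b₀).comp (K b₀)‖ ≤ ε / 2 := by
    apply ContinuousLinearMap.opNorm_le_bound _ (by positivity)
    intro x
    rcases eq_or_ne x 0 with rfl | hx
    · simp
    · have hxn : (0:ℝ) < ‖x‖ := norm_pos_iff.2 hx
      set u : H := ‖x‖⁻¹ • x with hudef
      have hu1 : ‖u‖ = 1 := by
        rw [hudef, norm_smul, norm_inv, norm_norm, inv_mul_cancel₀ hxn.ne']
      have hxu : x = ‖x‖ • u := by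
        rw [hudef, smul_smul, mul_inv_cancel₀ hxn.ne', one_smul]
      -- bound at the unit vector u
      have hub : ‖((T b).comp (K b) - (T b₀).comp (K b₀)) u‖ ≤ ε / 2 := by
        have hsplit : ((T b).comp (K b) - (T b₀).comp (K b₀)) u
            = T b ((K b - K b₀) u) + (T b (K b₀ u) - T b₀ (K b₀ u)) := by
          simp only [ContinuousLinearMap.sub_apply, ContinuousLinearMap.comp_apply,
            map_sub]
          abel
        -- first piece
        have hfirst : ‖T b ((K b - K b₀) u)‖ ≤ ε / 8 := by
          calc ‖T b ((K b - K b₀) u)‖ ≤ ‖T b‖ * ‖(K b - K b₀) u‖ :=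
                (T b).le_opNorm _
            _ ≤ M' * (‖K b - K b₀‖ * ‖u‖) := by
                gcongr
                · exact hM' b
                · exact (K b - K b₀).le_opNorm u
            _ ≤ M' * (δ * 1) := by
                have := hb2.le
                have := hu1.le
                gcongr
            _ ≤ (M' + 1) * δ := by nlinarith
            _ = ε / 8 := by
                rw [hδdef]; field_simp
        -- second piece: K b₀ u ∈ S, use the net
        have hmem : K b₀ u ∈ S := subset_closure ⟨u, by
          simpa [Metric.mem_closedBall, dist_eq_norm] using hu1.le, rfl⟩
        obtain ⟨y, hyt, hy⟩ : ∃ y ∈ t, K b₀ u ∈ Metric.ball y δ := by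
          have := htcov hmem
          simpa using this
        have hyd : ‖K b₀ u - y‖ < δ := by
          rwa [Metric.mem_ball, dist_eq_norm] at hy
        have hsecond : ‖T b (K b₀ u) - T b₀ (K b₀ u)‖ ≤ 3 * (ε / 8) := by
          have e1 : T b (K b₀ u) - T b₀ (K b₀ u)
              = T b (K b₀ u - y) + (T b y - T b₀ y) + T b₀ (y - K b₀ u) := by
            simp only [map_sub]; abel
          have b1 : ‖T b (K b₀ u - y)‖ ≤ ε / 8 := by
            calc ‖T b (K b₀ u - y)‖ ≤ ‖T b‖ * ‖K b₀ u - y‖ := (T b).le_opNorm _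
              _ ≤ M' * δ := by gcongr; exact hM' b
              _ ≤ (M' + 1) * δ := by nlinarith
              _ = ε / 8 := by rw [hδdef]; field_simp
          have b2 : ‖T b y - T b₀ y‖ ≤ ε / 8 := (hb1 y hyt).le
          have b3 : ‖T b₀ (y - K b₀ u)‖ ≤ ε / 8 := by
            calc ‖T b₀ (y - K b₀ u)‖ ≤ ‖T b₀‖ * ‖y - K b₀ u‖ := (T b₀).le_opNorm _
              _ ≤ M' * δ := by
                  gcongr
                  · exact hM' b₀
                  · rw [norm_sub_rev]; exact hyd.le
              _ ≤ (M' + 1) * δ := by nlinarith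
              _ = ε / 8 := by rw [hδdef]; field_simp
          calc ‖T b (K b₀ u) - T b₀ (K b₀ u)‖
              ≤ ‖T b (K b₀ u - y)‖ + ‖T b y - T b₀ y‖ + ‖T b₀ (y - K b₀ u)‖ := by
                rw [e1]; exact norm_add₃_le
            _ ≤ 3 * (ε / 8) := by linarith
        calc ‖((T b).comp (K b) - (T b₀).comp (K b₀)) u‖
            ≤ ‖T b ((K b - K b₀) u)‖ + ‖T b (K b₀ u) - T b₀ (K b₀ u)‖ := by
              rw [hsplit]; exact norm_add_le _ _
          _ ≤ ε / 8 + 3 * (ε / 8) := by linarith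
          _ = ε / 2 := by ring
      calc ‖((T b).comp (K b) - (T b₀).comp (K b₀)) x‖
          = ‖x‖ * ‖((T b).comp (K b) - (T b₀).comp (K b₀)) u‖ := by
            conv_lhs => rw [hxu]
            rw [ContinuousLinearMap.map_smul_of_tower, norm_smul, norm_norm]
        _ ≤ ε / 2 * ‖x‖ := by
            rw [mul_comm]
            gcongr
  calc ‖(T b).comp (K b) - (T b₀).comp (K b₀)‖ ≤ ε / 2 := key
    _ < ε := by linarith
end

section
/- Let H be a complex Hilbert space and let P and Q be orthogonal projections on H such that P − Q is a compact operator. Then the subspace {x ∈ H : Px = x and Qx = 0} is finite-dimensional. -/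
open Module End

theorem LinearMap.ker_sub_one_inf_ker_le_eigenspace_sub {R M : Type*} [CommRing R]
    [AddCommGroup M] [Module R M] (f g : End R M) :
    LinearMap.ker (f - 1) ⊓ LinearMap.ker g ≤ eigenspace (f - g) 1 := by
  rintro x ⟨hfx, hgx⟩
  rw [mem_eigenspace_iff, one_smul, sub_apply, hgx, sub_zero]
  exact sub_eq_zero.mp hfx

theorem finiteDimensional_ker_inf_of_compact_sub_general
    {H : Type*} [NormedAddCommGroup H] [InnerProductSpace ℂ H] [CompleteSpace H]
    (P Q : H →L[ℂ] H)
    (hPQ : IsCompactOperator (P - Q)) :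
    FiniteDimensional ℂ ↥(LinearMap.ker ((P - 1 : H →L[ℂ] H) : H →ₗ[ℂ] H) ⊓ LinearMap.ker (Q : H →ₗ[ℂ] H)) := by
  have hfin := ContinuousLinearMap.finite_dimensional_eigenspace hPQ 1 one_ne_zero
  exact Submodule.finiteDimensional_of_le (LinearMap.ker_sub_one_inf_ker_le_eigenspace_sub (P : H →ₗ[ℂ] H) Q)

/-- If `P` and `Q` are orthogonal projections with `P - Q` compact, then the subspace
`{x | P x = x ∧ Q x = 0}` (i.e. `ker (P - 1) ⊓ ker Q`) is finite-dimensional. -/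
theorem finiteDimensional_ker_inf_of_compact_sub
    {H : Type*} [NormedAddCommGroup H] [InnerProductSpace ℂ H] [CompleteSpace H]
    (P Q : H →L[ℂ] H)
    (hP : IsSelfAdjoint P) (hP2 : IsIdempotentElem P)
    (hQ : IsSelfAdjoint Q) (hQ2 : IsIdempotentElem Q)
    (hPQ : IsCompactOperator (P - Q)) :
    FiniteDimensional ℂ ↥(LinearMap.ker ((P - 1 : H →L[ℂ] H) : H →ₗ[ℂ] H) ⊓ LinearMap.ker (Q : H →ₗ[ℂ] H)) :=
  finiteDimensional_ker_inf_of_compact_sub_general P Q hPQ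
end

section
/- Let H be a separable complex Hilbert space and let F₀ and F₁ be bounded self-adjoint operators on H with F₀² = 1 and F₁² = 1, such that the four eigenspaces ker(F₀ − 1), ker(F₀ + 1), ker(F₁ − 1), ker(F₁ + 1) are all infinite-dimensional. Then there exists a unitary operator U on H with F₀ = U∘F₁∘U*. -/
/-!
A self-adjoint involution is the reflection in its `+1`-eigenspace `K`, and its `-1`-eigenspace
is `Kᗮ`. A separable infinite-dimensional Hilbert space has a Hilbert basis indexed by `ℕ`
(orthonormal vectors are `√2` apart, so there are countably many of them), so any two such spaces
are isometric. Hence there are isometries `K₁ ≃ K₀` and `K₁ᗮ ≃ K₀ᗮ`; their orthogonal sum is a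
unitary of `H` carrying `K₁` onto `K₀`, and it conjugates the reflection in `K₁` into the
reflection in `K₀`.
-/

open Submodule

section

variable {𝕜 E F : Type*} [RCLike 𝕜] [NormedAddCommGroup E] [InnerProductSpace 𝕜 E]
  [NormedAddCommGroup F] [InnerProductSpace 𝕜 F]

theorem Orthonormal.countable [TopologicalSpace.SeparableSpace E] {ι : Type*} {v : ι → E}
    (hv : Orthonormal 𝕜 v) : Countable ι := by
  refine Pairwise.countable_of_isOpen_disjoint (s := fun i ↦ Metric.ball (v i) 2⁻¹)
    (fun i j hij ↦ Metric.ball_disjoint_ball ?_) (fun _ ↦ Metric.isOpen_ball)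
    (fun _ ↦ Metric.nonempty_ball.2 (by norm_num))
  have h : ‖v i - v j‖ ^ 2 = 2 := by
    rw [@norm_sub_sq 𝕜, hv.1 i, hv.1 j, hv.2 hij]
    norm_num
  rw [dist_eq_norm]
  nlinarith [norm_nonneg (v i - v j)]

theorem HilbertBasis.finiteDimensional {ι : Type*} [Finite ι] (b : HilbertBasis ι 𝕜 E) :
    FiniteDimensional 𝕜 E :=
  have := Fintype.ofFinite ι
  .of_basis b.toOrthonormalBasis.toBasis

section CompleteSpace

variable [CompleteSpace E] [CompleteSpace F]

protected noncomputable def HilbertBasis.reindex {ι ι' : Type*} (b : HilbertBasis ι 𝕜 E)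
    (e : ι ≃ ι') : HilbertBasis ι' 𝕜 E :=
  .mk (b.orthonormal.comp e.symm e.symm.injective) <| by
    rw [Set.range_comp, e.symm.range_eq_univ, Set.image_univ, b.dense_span]

theorem nonempty_hilbertBasis_nat [TopologicalSpace.SeparableSpace E]
    (hE : ¬ FiniteDimensional 𝕜 E) : Nonempty (HilbertBasis ℕ 𝕜 E) := by
  obtain ⟨w, b, -⟩ := exists_hilbertBasis 𝕜 E
  have : Countable w := b.orthonormal.countable
  have : Infinite w := not_finite_iff_infinite.1 fun _ ↦ hE b.finiteDimensional
  obtain ⟨e⟩ := nonempty_equiv_of_countable (α := w) (β := ℕ)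
  exact ⟨b.reindex e⟩

theorem nonempty_linearIsometryEquiv_of_not_finiteDimensional
    [TopologicalSpace.SeparableSpace E] [TopologicalSpace.SeparableSpace F]
    (hE : ¬ FiniteDimensional 𝕜 E) (hF : ¬ FiniteDimensional 𝕜 F) : Nonempty (E ≃ₗᵢ[𝕜] F) := by
  obtain ⟨bE⟩ := nonempty_hilbertBasis_nat hE
  obtain ⟨bF⟩ := nonempty_hilbertBasis_nat hF
  exact ⟨bE.repr.trans bF.repr.symm⟩

end CompleteSpace

namespace Submodule

theorem reflection_eq_neg_iff (K : Submodule 𝕜 E) [K.HasOrthogonalProjection] (x : E) :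
    K.reflection x = -x ↔ x ∈ Kᗮ := by
  rw [← reflection_eq_self_iff, reflection_orthogonal_apply, neg_eq_iff_eq_neg]

theorem exists_linearIsometryEquiv_map_eq (K : Submodule 𝕜 E) (L : Submodule 𝕜 F)
    [K.HasOrthogonalProjection] [L.HasOrthogonalProjection]
    (f : K ≃ₗᵢ[𝕜] L) (g : Kᗮ ≃ₗᵢ[𝕜] Lᗮ) :
    ∃ e : E ≃ₗᵢ[𝕜] F, K.map (e.toLinearEquiv : E →ₗ[𝕜] F) = L := by
  let e := K.orthogonalDecomposition.trans
    ((LinearIsometryEquiv.withLpProdCongr 2 f g).trans L.orthogonalDecomposition.symm)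
  have he : ∀ x : K, e x = f x := fun x ↦ by
    simp [e, orthogonalProjectionOnto_mem_subspace_eq_self]
  refine ⟨e, le_antisymm ?_ fun y hy ↦ ⟨f.symm ⟨y, hy⟩, (f.symm ⟨y, hy⟩).2, ?_⟩⟩
  · rintro _ ⟨x, hx, rfl⟩
    exact (he ⟨x, hx⟩).symm ▸ (f ⟨x, hx⟩).2
  · simp [he]

end Submodule

section SelfAdjointInvolution

variable [CompleteSpace E]

theorem IsSelfAdjoint.eq_reflection_ker_sub_one {T : E →L[𝕜] E} (hT : IsSelfAdjoint T)
    (hT2 : T * T = 1) :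
    T = (reflection (LinearMap.ker ((T - 1 : E →L[𝕜] E) : E →ₗ[𝕜] E)) : E →L[𝕜] E) := by
  set K := LinearMap.ker ((T - 1 : E →L[𝕜] E) : E →ₗ[𝕜] E)
  have hTT (y : E) : T (T y) = y := congr($hT2 y)
  have hK (y : E) : y ∈ K ↔ T y = y := by simp [K, sub_eq_zero]
  have hKperp (y : E) (hy : y ∈ Kᗮ) : T y = -y := by
    have h₁ : y + T y ∈ K := (hK _).2 (by rw [map_add, hTT, add_comm])
    have h₂ : y + T y ∈ Kᗮ := by
      refine add_mem hy fun k hk ↦ ?_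
      calc _ = inner 𝕜 (T k) y := (hT.isSymmetric k y).symm
        _ = 0 := by rw [(hK k).1 hk]; exact (mem_orthogonal K y).1 hy k hk
    exact eq_neg_of_add_eq_zero_right (by simpa using (K.inf_orthogonal_eq_bot).le ⟨h₁, h₂⟩)
  ext x
  have hx : x - K.starProjection x ∈ Kᗮ := sub_starProjection_mem_orthogonal x
  calc T x = T (K.starProjection x) + T (x - K.starProjection x) := by
        rw [← map_add, add_sub_cancel]
    _ = K.starProjection x + -(x - K.starProjection x) := by
      rw [(hK _).1 (K.starProjection_apply_mem x), hKperp _ hx]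
    _ = K.reflection x := by rw [reflection_apply]; module

theorem IsSelfAdjoint.ker_add_one_eq_orthogonal {T : E →L[𝕜] E} (hT : IsSelfAdjoint T)
    (hT2 : T * T = 1) :
    LinearMap.ker ((T + 1 : E →L[𝕜] E) : E →ₗ[𝕜] E) =
      (LinearMap.ker ((T - 1 : E →L[𝕜] E) : E →ₗ[𝕜] E))ᗮ := by
  ext x
  have hx : T x = reflection _ x := congr($(hT.eq_reflection_ker_sub_one hT2) x)
  rw [← reflection_eq_neg_iff, ← hx]
  simp [add_eq_zero_iff_eq_neg]

end SelfAdjointInvolution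

end

/-- Two self-adjoint involutions on a separable Hilbert space whose `±1`-eigenspaces are
all infinite-dimensional are unitarily equivalent. -/
theorem involutions_unitarily_equivalent
    {H : Type*} [NormedAddCommGroup H] [InnerProductSpace ℂ H] [CompleteSpace H]
    [TopologicalSpace.SeparableSpace H]
    (F₀ F₁ : H →L[ℂ] H)
    (hF₀ : IsSelfAdjoint F₀) (hF₀sq : F₀ * F₀ = 1)
    (hF₁ : IsSelfAdjoint F₁) (hF₁sq : F₁ * F₁ = 1)
    (h₀p : ¬ FiniteDimensional ℂ ↥(LinearMap.ker ((F₀ - 1 : H →L[ℂ] H) : H →ₗ[ℂ] H)))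
    (h₀m : ¬ FiniteDimensional ℂ ↥(LinearMap.ker ((F₀ + 1 : H →L[ℂ] H) : H →ₗ[ℂ] H)))
    (h₁p : ¬ FiniteDimensional ℂ ↥(LinearMap.ker ((F₁ - 1 : H →L[ℂ] H) : H →ₗ[ℂ] H)))
    (h₁m : ¬ FiniteDimensional ℂ ↥(LinearMap.ker ((F₁ + 1 : H →L[ℂ] H) : H →ₗ[ℂ] H))) :
    ∃ U : H →L[ℂ] H, (star U * U = 1 ∧ U * star U = 1) ∧ F₀ = U * F₁ * star U := by
  set K₀ := LinearMap.ker ((F₀ - 1 : H →L[ℂ] H) : H →ₗ[ℂ] H)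
  set K₁ := LinearMap.ker ((F₁ - 1 : H →L[ℂ] H) : H →ₗ[ℂ] H)
  rw [hF₀.ker_add_one_eq_orthogonal hF₀sq] at h₀m
  rw [hF₁.ker_add_one_eq_orthogonal hF₁sq] at h₁m
  obtain ⟨f⟩ := nonempty_linearIsometryEquiv_of_not_finiteDimensional h₁p h₀p
  obtain ⟨g⟩ := nonempty_linearIsometryEquiv_of_not_finiteDimensional h₁m h₀m
  obtain ⟨e, he⟩ := K₁.exists_linearIsometryEquiv_map_eq K₀ f g
  have hconj := reflection_map e K₁
  simp only [he] at hconj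
  refine ⟨e, Unitary.mem_iff.1 (Unitary.linearIsometryEquiv.symm e).2, ?_⟩
  calc F₀ = K₀.reflection := hF₀.eq_reflection_ker_sub_one hF₀sq
    _ = e * K₁.reflection * star (e : H →L[ℂ] H) := by
      rw [hconj, LinearIsometryEquiv.star_eq_symm]; ext; simp
    _ = e * F₁ * star (e : H →L[ℂ] H) := by rw [← hF₁.eq_reflection_ker_sub_one hF₁sq]
end

section
/- The non-unital star-subalgebra of C₀(ℝ, ℂ) (continuous complex-valued functions on ℝ vanishing at infinity, with the supremum norm) generated by the function t ↦ (t + i)⁻¹ is dense in C₀(ℝ, ℂ). Equivalently, the closed subalgebra of C₀(ℝ, ℂ) generated by the two functions t ↦ (t + i)⁻¹ and t ↦ (t − i)⁻¹ is all of C₀(ℝ, ℂ). -/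
/-!
If `f ∈ C₀(X, 𝕜)` is injective and never vanishes, then `f` extends to a continuous bijection
from the one-point compactification of `X` onto the compact set `s = {0} ∪ f(X)`, sending the
point at infinity to `0`; being a bijection from a compact space onto a Hausdorff one, it is a
homeomorphism. Hence precomposition with `f` is a surjective, contractive star homomorphism
`C(s, 𝕜)₀ → C₀(X, 𝕜)` taking the identity of `s` to `f`, and Stone–Weierstrass on `s` (the
identity generates a dense star subalgebra of `C(s, 𝕜)₀`) transports to density of the star
subalgebra generated by `f`. The function `t ↦ (t + i)⁻¹` is injective and nowhere zero.
-/

open scoped ZeroAtInfty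

/-- The function `t ↦ (t + i)⁻¹` as an element of `C₀(ℝ, ℂ)`. -/
noncomputable def resolventPlus : C₀(ℝ, ℂ) where
  toFun t := ((t : ℂ) + Complex.I)⁻¹
  continuous_toFun := by
    refine (Complex.continuous_ofReal.add continuous_const).inv₀ fun t ht => ?_
    have := congrArg Complex.im ht
    simp at this
  zero_at_infty' := by
    rw [tendsto_zero_iff_norm_tendsto_zero]
    have h1 : Filter.Tendsto (fun t : ℝ => ‖(t : ℂ) + Complex.I‖)
        (Filter.cocompact ℝ) Filter.atTop := by
      refine Filter.tendsto_atTop_mono (fun t => ?_)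
        (Filter.tendsto_atTop_add_const_right _ (-1) tendsto_norm_cocompact_atTop)
      have h := norm_sub_norm_le ((t : ℂ)) (-Complex.I)
      simpa [sub_neg_eq_add] using h
    have h2 : Filter.Tendsto (fun t : ℝ => ‖(t : ℂ) + Complex.I‖⁻¹) (Filter.cocompact ℝ)
        (nhds 0) := h1.inv_tendsto_atTop
    simpa [norm_inv, Pi.inv_def] using h2

open scoped ContinuousMapZero
open Filter Topology Set Function

namespace ZeroAtInftyContinuousMap

variable {X β : Type*} [TopologicalSpace X] [TopologicalSpace β] [Zero β]

instance (f : C₀(X, β)) : Fact ((0 : β) ∈ insert 0 (range f)) := ⟨mem_insert _ _⟩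

instance (f : C₀(X, β)) : CompactSpace (insert 0 (range f) : Set β) :=
  isCompact_iff_compactSpace.mp <|
    (zero_at_infty f).isCompact_insert_range_of_cocompact f.continuous

def codRestrictInsertZero (f : C₀(X, β)) : C(X, (insert 0 (range f) : Set β)) :=
  ⟨fun x ↦ ⟨f x, mem_insert_of_mem _ (mem_range_self x)⟩, by fun_prop⟩

lemma tendsto_codRestrictInsertZero (f : C₀(X, β)) :
    Tendsto f.codRestrictInsertZero (cocompact X) (𝓝 0) :=
  tendsto_subtype_rng.mpr (zero_at_infty f)

noncomputable def onePointHomeomorph [T2Space β] (f : C₀(X, β)) (hf : Injective f)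
    (hf₀ : ∀ x, f x ≠ 0) : OnePoint X ≃ₜ (insert 0 (range f) : Set β) := by
  have := T2Space.of_injective_continuous hf f.continuous
  let F : OnePoint X → (insert 0 (range f) : Set β) := fun p ↦ p.elim 0 f.codRestrictInsertZero
  have hF : Bijective F := by
    constructor
    · intro p q h
      induction p using OnePoint.rec <;> induction q using OnePoint.rec
      · rfl
      · exact absurd (congrArg Subtype.val h).symm (hf₀ _)
      · exact absurd (congrArg Subtype.val h) (hf₀ _)
      · exact congrArg _ (hf (congrArg Subtype.val h))
    · rintro ⟨y, rfl | ⟨x, rfl⟩⟩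
      · exact ⟨OnePoint.infty, rfl⟩
      · exact ⟨x, rfl⟩
  refine Continuous.homeoOfEquivCompactToT2 (f := Equiv.ofBijective F hF) ?_
  refine (OnePoint.continuous_iff _).mpr ⟨?_, f.codRestrictInsertZero.continuous⟩
  rw [coclosedCompact_eq_cocompact]
  exact f.tendsto_codRestrictInsertZero

variable [T2Space β] (f : C₀(X, β)) (hf : Injective f) (hf₀ : ∀ x, f x ≠ 0)

@[simp]
lemma onePointHomeomorph_infty : f.onePointHomeomorph hf hf₀ OnePoint.infty = 0 := rfl

@[simp]
lemma onePointHomeomorph_coe (x : X) :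
    f.onePointHomeomorph hf hf₀ x = f.codRestrictInsertZero x := rfl

end ZeroAtInftyContinuousMap

namespace ContinuousMapZero

variable {X Y 𝕜 : Type*} [TopologicalSpace X] [TopologicalSpace Y] [Zero Y] [RCLike 𝕜]

def compZeroAtInfty (φ : C(X, Y)) (hφ : Tendsto φ (cocompact X) (𝓝 0)) :
    C(Y, 𝕜)₀ →⋆ₙₐ[𝕜] C₀(X, 𝕜) where
  toFun g := ⟨(g : C(Y, 𝕜)).comp φ, by
    simpa [map_zero g] using ((map_continuous g).tendsto 0).comp hφ⟩
  map_add' _ _ := rfl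
  map_mul' _ _ := rfl
  map_zero' := rfl
  map_smul' _ _ := rfl
  map_star' _ := rfl

lemma norm_compZeroAtInfty_le [CompactSpace Y] (φ : C(X, Y))
    (hφ : Tendsto φ (cocompact X) (𝓝 0)) (g : C(Y, 𝕜)₀) :
    ‖compZeroAtInfty φ hφ g‖ ≤ ‖g‖ := by
  rw [← ZeroAtInftyContinuousMap.norm_toBCF_eq_norm]
  exact (BoundedContinuousFunction.norm_le (norm_nonneg g)).mpr fun x ↦
    (g : C(Y, 𝕜)).norm_coe_le_norm (φ x)

lemma continuous_compZeroAtInfty [CompactSpace Y] (φ : C(X, Y))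
    (hφ : Tendsto φ (cocompact X) (𝓝 0)) :
    Continuous (compZeroAtInfty (𝕜 := 𝕜) φ hφ) :=
  AddMonoidHomClass.continuous_of_bound _ 1 fun g ↦ by
    simpa using norm_compZeroAtInfty_le φ hφ g

end ContinuousMapZero

namespace ZeroAtInftyContinuousMap

variable {X 𝕜 : Type*} [TopologicalSpace X] [RCLike 𝕜]

lemma surjective_compZeroAtInfty_codRestrictInsertZero (f : C₀(X, 𝕜)) (hf : Injective f)
    (hf₀ : ∀ x, f x ≠ 0) :
    Surjective (ContinuousMapZero.compZeroAtInfty (𝕜 := 𝕜) f.codRestrictInsertZero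
      f.tendsto_codRestrictInsertZero) := by
  have := T2Space.of_injective_continuous hf f.continuous
  intro g
  have hg : Tendsto g (coclosedCompact X) (𝓝 0) := by
    rw [coclosedCompact_eq_cocompact]
    exact zero_at_infty g
  let e := f.onePointHomeomorph hf hf₀
  let G : C(OnePoint X, 𝕜) := OnePoint.continuousMapMk g 0 hg
  refine ⟨⟨G.comp (e.symm : C(_, OnePoint X)), ?_⟩, ?_⟩
  · change G (e.symm 0) = 0
    rw [e.symm_apply_eq.mpr (f.onePointHomeomorph_infty hf hf₀).symm]
    rfl
  · ext x
    change G (e.symm (f.codRestrictInsertZero x)) = g x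
    rw [e.symm_apply_eq.mpr (f.onePointHomeomorph_coe hf hf₀ x).symm]
    rfl

theorem dense_adjoin_singleton_of_injective_of_ne_zero (f : C₀(X, 𝕜)) (hf : Injective f)
    (hf₀ : ∀ x, f x ≠ 0) :
    Dense (NonUnitalStarAlgebra.adjoin 𝕜 {f} : Set C₀(X, 𝕜)) := by
  set Φ := ContinuousMapZero.compZeroAtInfty (𝕜 := 𝕜) f.codRestrictInsertZero
    f.tendsto_codRestrictInsertZero
  have hΦ : Φ (.id _) = f := rfl
  rw [← hΦ, ← NonUnitalStarAlgHom.map_adjoin_singleton, NonUnitalStarSubalgebra.coe_map]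
  exact (f.surjective_compZeroAtInfty_codRestrictInsertZero hf hf₀).denseRange.dense_image
    (ContinuousMapZero.continuous_compZeroAtInfty _ _) (ContinuousMapZero.adjoin_id_dense _)

end ZeroAtInftyContinuousMap

lemma Complex.ofReal_add_I_ne_zero (t : ℝ) : (t : ℂ) + Complex.I ≠ 0 := fun h ↦ by
  simpa using congrArg Complex.im h

lemma injective_resolventPlus : Injective resolventPlus := fun s t h ↦ by
  have h' : ((s : ℂ) + Complex.I)⁻¹ = ((t : ℂ) + Complex.I)⁻¹ := h
  exact_mod_cast add_right_cancel (inv_injective h')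

lemma resolventPlus_ne_zero (t : ℝ) : resolventPlus t ≠ 0 :=
  inv_ne_zero (Complex.ofReal_add_I_ne_zero t)

/-- The non-unital star-subalgebra of `C₀(ℝ, ℂ)` generated by `t ↦ (t + i)⁻¹`
is dense in `C₀(ℝ, ℂ)`. -/
theorem dense_adjoin_resolventPlus :
    Dense ((NonUnitalStarAlgebra.adjoin ℂ {resolventPlus} :
      NonUnitalStarSubalgebra ℂ C₀(ℝ, ℂ)) : Set C₀(ℝ, ℂ)) :=
  resolventPlus.dense_adjoin_singleton_of_injective_of_ne_zero injective_resolventPlus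
    resolventPlus_ne_zero
end
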